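/- arXiv:1609.09565 — 3 statements merged into one kernel-verified Lean document; each statement's English description precedes it below -/
import Mathlib

section
/- If βλmax(A)/δ > 1, then the SIRS nonlinear map F has exactly one fixed point (P_R*, P_I*) in D other than the origin; moreover this fixed point satisfies P_R* = (δ/γ)P_I* componentwise and all its entries are strictly positive. -/
/-!
Every fixed point of `F` has `P_R = (δ/γ) P_I`, and `x = P_I` solves `x = H x` with
`H x i = g_i / (δ + c g_i)` (`reducedMap`), `c = 1 + δ/γ` and `g_i = 1 - ∏_{j ∼ i} (1 - β x_j)`
(`infectionProb`). `H` is monotone on `[0,1]^n` and strictly subhomogeneous: `s H(x) < H(s x)`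
for `0 < s < 1`.

Existence: for the positive Perron eigenvector `w` of `A`, `g_i(εw) ≈ β λmax ε w_i`, so
`H(εw) ≥ εw` for small `ε` because `β λmax > δ`, and Knaster–Tarski on the box `[εw, 1]` gives a
fixed point. Uniqueness: zeros of a fixed point propagate along edges, so on a connected graph a
nonzero fixed point is positive; for positive fixed points `x, y` and `s = min_i y_i / x_i < 1`,
at a minimising `k` we would get `y_k = H(y)_k ≥ H(s x)_k > s H(x)_k = s x_k = y_k`.
-/

open Matrix Finset

/-- The largest eigenvalue of a (symmetric) real matrix, as the supremum of its real spectrum. -/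
noncomputable def lamMax {n : ℕ} (M : Matrix (Fin n) (Fin n) ℝ) : ℝ :=
  sSup (spectrum ℝ M)

/-- The domain `D = {(P_R, P_I) ∈ [0,1]^n × [0,1]^n : P_R + P_I ⪯ 1}`. -/
def sirsD (n : ℕ) : Set ((Fin n → ℝ) × (Fin n → ℝ)) :=
  {p | p.1 ∈ Set.Icc (0 : Fin n → ℝ) 1 ∧ p.2 ∈ Set.Icc (0 : Fin n → ℝ) 1 ∧
    ∀ i, p.1 i + p.2 i ≤ 1}

/-- The SIRS nonlinear (mean-field) map `F(P_R, P_I)`: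
`P_R,i′ = (1−γ)P_R,i + δ P_I,i` and
`P_I,i′ = (1−δ)P_I,i + (1 − ∏_{j∈N_i}(1−β P_I,j))(1 − P_R,i − P_I,i)`. -/
noncomputable def sirsF {n : ℕ} (G : SimpleGraph (Fin n)) [DecidableRel G.Adj]
    (β δ γ : ℝ) (p : (Fin n → ℝ) × (Fin n → ℝ)) : (Fin n → ℝ) × (Fin n → ℝ) :=
  (fun i => (1 - γ) * p.1 i + δ * p.2 i,
   fun i => (1 - δ) * p.2 i +
     (1 - ∏ j ∈ G.neighborFinset i, (1 - β * p.2 j)) * (1 - p.1 i - p.2 i))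

open Filter Topology

lemma Matrix.PosSemidef.mulVec_abs_eq_zero {ι : Type*} [Fintype ι] {B : Matrix ι ι ℝ}
    (hB : B.PosSemidef) (hoff : ∀ i j, i ≠ j → B i j ≤ 0) {v : ι → ℝ} (hv : B *ᵥ v = 0) :
    B *ᵥ |v| = 0 := by
  -- the off-diagonal entries are `≤ 0`, so passing from `v` to `|v|` cannot raise the form
  have hquad : |v| ⬝ᵥ B *ᵥ |v| ≤ v ⬝ᵥ B *ᵥ v := by
    simp only [dotProduct, mulVec, Finset.mul_sum, Pi.abs_apply]
    refine Finset.sum_le_sum fun i _ => Finset.sum_le_sum fun j _ => ?_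
    rcases eq_or_ne i j with rfl | hij
    · rw [mul_left_comm, abs_mul_abs_self, mul_left_comm]
    · nlinarith [hoff i j hij, le_abs_self (v i * v j), abs_mul (v i) (v j)]
  rw [hv, dotProduct_zero] at hquad
  have hnonneg := hB.dotProduct_mulVec_nonneg |v|
  rw [star_trivial] at hnonneg
  simpa using (hB.dotProduct_mulVec_zero_iff |v|).1 (by simpa using le_antisymm hquad hnonneg)

lemma lamMax_mem_spectrum {n : ℕ} [Nonempty (Fin n)] {A : Matrix (Fin n) (Fin n) ℝ}
    (hA : A.IsHermitian) : lamMax A ∈ spectrum ℝ A :=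
  (hA.spectrum_real_eq_range_eigenvalues ▸ Set.range_nonempty _ :
    (spectrum ℝ A).Nonempty).csSup_mem A.finite_real_spectrum

lemma le_lamMax {n : ℕ} {A : Matrix (Fin n) (Fin n) ℝ} {x : ℝ} (hx : x ∈ spectrum ℝ A) :
    x ≤ lamMax A :=
  le_csSup A.finite_real_spectrum.bddAbove hx

open scoped MatrixOrder in
lemma posSemidef_algebraMap_lamMax_sub {n : ℕ} {A : Matrix (Fin n) (Fin n) ℝ}
    (hA : A.IsHermitian) : (algebraMap ℝ _ (lamMax A) - A).PosSemidef :=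
  Matrix.le_iff.mp (le_algebraMap_of_spectrum_le (fun _ hx => le_lamMax hx) hA.isSelfAdjoint)

lemma exists_nonneg_mulVec_eq_lamMax_smul {n : ℕ} [Nonempty (Fin n)]
    {A : Matrix (Fin n) (Fin n) ℝ} (hA : A.IsHermitian) (hA0 : ∀ i j, 0 ≤ A i j) :
    ∃ w : Fin n → ℝ, 0 ≤ w ∧ w ≠ 0 ∧ A *ᵥ w = lamMax A • w := by
  set B := algebraMap ℝ (Matrix (Fin n) (Fin n) ℝ) (lamMax A) - A
  obtain ⟨v, hv0, hv⟩ : ∃ v ≠ 0, B *ᵥ v = 0 := by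
    rw [Matrix.exists_mulVec_eq_zero_iff]
    by_contra hdet
    exact spectrum.mem_iff.mp (lamMax_mem_spectrum hA)
      ((Matrix.isUnit_iff_isUnit_det B).2 (isUnit_iff_ne_zero.2 hdet))
  have hoff : ∀ i j, i ≠ j → B i j ≤ 0 := fun i j hij => by
    simp [B, Matrix.algebraMap_matrix_apply, hij, hA0 i j]
  have hw := (posSemidef_algebraMap_lamMax_sub hA).mulVec_abs_eq_zero hoff hv
  refine ⟨|v|, abs_nonneg v, fun h => hv0 (funext fun i => abs_eq_zero.mp (congrFun h i)), ?_⟩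
  rw [Matrix.sub_mulVec, Algebra.algebraMap_eq_smul_one, Matrix.smul_mulVec,
    Matrix.one_mulVec, sub_eq_zero] at hw
  exact hw.symm

lemma SimpleGraph.Preconnected.forall_of_adj {V : Type*} {G : SimpleGraph V}
    (hG : G.Preconnected) {P : V → Prop} (hP : ∀ i j, G.Adj i j → P j → P i) {j : V} (hj : P j)
    (i : V) : P i := by
  induction (G.reachable_iff_reflTransGen i j).mp (hG i j) using
    Relation.ReflTransGen.head_induction_on with
  | refl => exact hj
  | head hadj _ ih => exact hP _ _ hadj ih

lemma SimpleGraph.Connected.exists_pos_mulVec_adjMatrix_eq_lamMax_smul {n : ℕ}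
    {G : SimpleGraph (Fin n)} [DecidableRel G.Adj] (hG : G.Connected) :
    ∃ w : Fin n → ℝ, (∀ i, 0 < w i) ∧ G.adjMatrix ℝ *ᵥ w = lamMax (G.adjMatrix ℝ) • w := by
  have : Nonempty (Fin n) := hG.nonempty
  obtain ⟨w, hw0, hwne, hw⟩ := exists_nonneg_mulVec_eq_lamMax_smul (G.isHermitian_adjMatrix ℝ)
    (fun i j => by simp only [SimpleGraph.adjMatrix_apply]; positivity)
  refine ⟨w, fun i => ?_, hw⟩
  obtain ⟨j, hj⟩ : ∃ j, 0 < w j := by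
    by_contra! h
    exact hwne (le_antisymm h hw0)
  refine hG.preconnected.forall_of_adj (P := fun i => 0 < w i) (fun i k hik hk => ?_) hj i
  have hsum := congrFun hw i
  rw [SimpleGraph.adjMatrix_mulVec_apply, Pi.smul_apply, smul_eq_mul] at hsum
  have hpos : 0 < lamMax (G.adjMatrix ℝ) * w i := hsum ▸ hk.trans_le
    (Finset.single_le_sum (f := w) (fun _ _ => hw0 _) ((G.mem_neighborFinset i k).2 hik))
  exact (hw0 i).lt_of_ne fun h => by simp [← h] at hpos

lemma Finset.prod_one_sub_mul_le {ι : Type*} (s : Finset ι) {a : ι → ℝ}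
    (ha : ∀ j ∈ s, a j ∈ Set.Icc (0 : ℝ) 1) {t : ℝ} (ht : t ∈ Set.Icc (0 : ℝ) 1) :
    ∏ j ∈ s, (1 - t * a j) ≤ 1 - t + t * ∏ j ∈ s, (1 - a j) := by
  obtain ⟨ht0, ht1⟩ := ht
  induction s using Finset.cons_induction with
  | empty => simp
  | cons j s hj ih =>
    rw [Finset.prod_cons, Finset.prod_cons]
    obtain ⟨haj0, haj1⟩ := ha j (Finset.mem_cons_self j s)
    have has : ∀ k ∈ s, a k ∈ Set.Icc (0 : ℝ) 1 := fun k hk => ha k (Finset.mem_cons_of_mem hk)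
    have hP0 : 0 ≤ ∏ k ∈ s, (1 - a k) := Finset.prod_nonneg fun k hk => by linarith [(has k hk).2]
    have hP1 : ∏ k ∈ s, (1 - a k) ≤ 1 :=
      Finset.prod_le_one (fun k hk => by linarith [(has k hk).2]) fun k hk => by
        linarith [(has k hk).1]
    calc (1 - t * a j) * ∏ k ∈ s, (1 - t * a k)
        ≤ (1 - t * a j) * (1 - t + t * ∏ k ∈ s, (1 - a k)) :=
          mul_le_mul_of_nonneg_left (ih has) (by nlinarith)
      _ ≤ 1 - t + t * ((1 - a j) * ∏ k ∈ s, (1 - a k)) := by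
          nlinarith [mul_nonneg (mul_nonneg ht0 haj0) (mul_nonneg (sub_nonneg.2 ht1)
            (sub_nonneg.2 hP1))]

lemma Finset.prod_one_sub_le_one_sub_sum_add_sq {ι : Type*} (s : Finset ι) {a : ι → ℝ}
    (ha : ∀ j ∈ s, a j ∈ Set.Icc (0 : ℝ) 1) :
    ∏ j ∈ s, (1 - a j) ≤ 1 - ∑ j ∈ s, a j + (∑ j ∈ s, a j) ^ 2 := by
  induction s using Finset.cons_induction with
  | empty => simp
  | cons j s hj ih =>
    rw [Finset.prod_cons, Finset.sum_cons]
    obtain ⟨haj0, haj1⟩ := ha j (Finset.mem_cons_self j s)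
    have has : ∀ k ∈ s, a k ∈ Set.Icc (0 : ℝ) 1 := fun k hk => ha k (Finset.mem_cons_of_mem hk)
    have hS0 : 0 ≤ ∑ k ∈ s, a k := Finset.sum_nonneg fun k hk => (has k hk).1
    nlinarith [ih has, sq_nonneg (∑ k ∈ s, a k)]

lemma exists_isFixedPt_mem_Icc {α : Type*} [ConditionallyCompleteLattice α] {f : α → α}
    {a b : α} (hab : a ≤ b) (hf : MonotoneOn f (Set.Icc a b))
    (hmaps : Set.MapsTo f (Set.Icc a b) (Set.Icc a b)) :
    ∃ x ∈ Set.Icc a b, Function.IsFixedPt f x := by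
  have : Fact (a ≤ b) := ⟨hab⟩
  let g : Set.Icc a b →o Set.Icc a b := ⟨hmaps.restrict, fun x y hxy => hf x.2 y.2 hxy⟩
  exact ⟨g.lfp, g.lfp.2, congrArg Subtype.val g.isFixedPt_lfp⟩

lemma isFixedPt_le_of_mul_lt {ι : Type*} [Finite ι] {f : (ι → ℝ) → ι → ℝ}
    (hmono : MonotoneOn f (Set.Icc 0 1))
    (hsub : ∀ x ∈ Set.Icc (0 : ι → ℝ) 1, ∀ s ∈ Set.Ioo (0 : ℝ) 1, ∀ i, 0 < f x i →
      s * f x i < f (s • x) i)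
    {x y : ι → ℝ} (hx : x ∈ Set.Icc 0 1) (hy : y ∈ Set.Icc 0 1) (hxpos : ∀ i, 0 < x i)
    (hypos : ∀ i, 0 < y i) (hfx : Function.IsFixedPt f x) (hfy : Function.IsFixedPt f y) :
    x ≤ y := by
  intro i
  have : Nonempty ι := ⟨i⟩
  -- compare `y` with the largest multiple `s • x` lying below it
  obtain ⟨k, hk⟩ := Finite.exists_min fun j => y j / x j
  set s := y k / x k
  have hsx : s • x ≤ y := fun j => by
    simpa [div_mul_cancel₀ _ (hxpos j).ne'] using
      mul_le_mul_of_nonneg_right (hk j) (hxpos j).le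
  by_cases hs : 1 ≤ s
  · exact (le_mul_of_one_le_left (hxpos i).le hs).trans (hsx i)
  have hs0 : 0 < s := div_pos (hypos k) (hxpos k)
  have hsxk : s * x k = y k := div_mul_cancel₀ _ (hxpos k).ne'
  have hsxI : s • x ∈ Set.Icc (0 : ι → ℝ) 1 :=
    ⟨smul_nonneg hs0.le hx.1, hsx.trans hy.2⟩
  have hlt := hsub x hx s ⟨hs0, not_le.mp hs⟩ k (hfx.symm ▸ hxpos k)
  have hle := hmono hsxI hy hsx k
  rw [hfx.eq] at hlt
  rw [hfy.eq] at hle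
  linarith

lemma div_add_mul_monotoneOn {δ c : ℝ} (hδ : 0 < δ) (hc : 0 ≤ c) :
    MonotoneOn (fun t => t / (δ + c * t)) (Set.Ici 0) := fun t (ht : 0 ≤ t) u (hu : 0 ≤ u) htu => by
  rw [div_le_div_iff₀ (by positivity) (by positivity)]
  nlinarith

lemma div_add_mul_lt_inv {δ c t : ℝ} (hδ : 0 < δ) (hc : 0 < c) (ht : 0 ≤ t) :
    t / (δ + c * t) < c⁻¹ := by
  rw [div_lt_iff₀ (by positivity), inv_mul_eq_div, lt_div_iff₀ hc]
  linarith

lemma mul_div_add_mul_lt {δ c t s : ℝ} (hδ : 0 < δ) (hc : 0 < c) (ht : 0 < t)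
    (hs : s ∈ Set.Ioo (0 : ℝ) 1) : s * (t / (δ + c * t)) < s * t / (δ + c * (s * t)) := by
  obtain ⟨hs0, hs1⟩ := hs
  rw [mul_div_assoc']
  refine div_lt_div_of_pos_left (by positivity) (by positivity) ?_
  nlinarith [mul_pos hc ht]

lemma div_le_div_add_mul_of_sub_sq_le {δ c b S t : ℝ} (hδ : 0 < δ) (hδb : δ < b) (hc : 0 ≤ c)
    (hS : 0 ≤ S) (hSb : (b + c) * S ≤ b - δ) (ht : S - S ^ 2 ≤ t) :
    S / b ≤ t / (δ + c * t) := by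
  have hS1 : S ≤ 1 := by nlinarith
  have hSS : 0 ≤ S - S ^ 2 := by nlinarith
  refine le_trans ?_ (div_add_mul_monotoneOn hδ hc hSS (hSS.trans ht) ht)
  rw [div_le_div_iff₀ (by linarith) (by positivity)]
  nlinarith [mul_nonneg hS (mul_nonneg hc (sq_nonneg S)), mul_nonneg hS hS]

lemma mul_apply_mem_Icc {ι : Type*} {β : ℝ} (hβ : β ∈ Set.Icc (0 : ℝ) 1) {x : ι → ℝ}
    (hx : x ∈ Set.Icc 0 1) (j : ι) : β * x j ∈ Set.Icc (0 : ℝ) 1 :=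
  ⟨mul_nonneg hβ.1 (hx.1 j), mul_le_one₀ hβ.2 (hx.1 j) (hx.2 j)⟩

section Infection

variable {V : Type*} [Fintype V] (G : SimpleGraph V) [DecidableRel G.Adj] {β δ c : ℝ}

noncomputable def infectionProb (β : ℝ) (x : V → ℝ) (i : V) : ℝ :=
  1 - ∏ j ∈ G.neighborFinset i, (1 - β * x j)

variable {G}

lemma infectionProb_monotoneOn (hβ : β ∈ Set.Icc (0 : ℝ) 1) :
    MonotoneOn (infectionProb G β) (Set.Icc 0 1) := fun _ _ _ hy hxy _ =>
  sub_le_sub_left (Finset.prod_le_prod (fun j _ => sub_nonneg.2 (mul_apply_mem_Icc hβ hy j).2)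
    fun j _ => sub_le_sub_left (mul_le_mul_of_nonneg_left (hxy j) hβ.1) 1) 1

lemma infectionProb_nonneg (hβ : β ∈ Set.Icc (0 : ℝ) 1) {x : V → ℝ} (hx : x ∈ Set.Icc 0 1)
    (i : V) : 0 ≤ infectionProb G β x i := by
  simpa [infectionProb] using
    infectionProb_monotoneOn (G := G) hβ ⟨le_rfl, zero_le_one⟩ hx hx.1 i

lemma mul_le_infectionProb (hβ : β ∈ Set.Icc (0 : ℝ) 1) {x : V → ℝ} (hx : x ∈ Set.Icc 0 1)
    {i j : V} (hij : G.Adj i j) : β * x j ≤ infectionProb G β x i := by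
  have := Finset.prod_le_prod_of_subset_of_le_one
    (Finset.singleton_subset_iff.2 ((G.mem_neighborFinset i j).2 hij))
    (fun k _ => sub_nonneg.2 (mul_apply_mem_Icc hβ hx k).2)
    fun k _ _ => sub_le_self _ (mul_apply_mem_Icc hβ hx k).1
  rw [Finset.prod_singleton] at this
  unfold infectionProb
  linarith

lemma mul_infectionProb_le (hβ : β ∈ Set.Icc (0 : ℝ) 1) {x : V → ℝ} (hx : x ∈ Set.Icc 0 1)
    {s : ℝ} (hs : s ∈ Set.Icc (0 : ℝ) 1) (i : V) :
    s * infectionProb G β x i ≤ infectionProb G β (s • x) i := by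
  have := Finset.prod_one_sub_mul_le (G.neighborFinset i) (a := fun j => β * x j)
    (fun j _ => mul_apply_mem_Icc hβ hx j) hs
  simp only [infectionProb, Pi.smul_apply, smul_eq_mul, mul_left_comm β s]
  linarith

lemma sub_sq_le_infectionProb (hβ : β ∈ Set.Icc (0 : ℝ) 1) {x : V → ℝ} (hx : x ∈ Set.Icc 0 1)
    (i : V) :
    β * ∑ j ∈ G.neighborFinset i, x j - (β * ∑ j ∈ G.neighborFinset i, x j) ^ 2 ≤
      infectionProb G β x i := by
  have := Finset.prod_one_sub_le_one_sub_sum_add_sq (G.neighborFinset i) (a := fun j => β * x j)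
    fun j _ => mul_apply_mem_Icc hβ hx j
  rw [← Finset.mul_sum] at this
  unfold infectionProb
  linarith

variable (G) in
noncomputable def reducedMap (β δ c : ℝ) (x : V → ℝ) (i : V) : ℝ :=
  infectionProb G β x i / (δ + c * infectionProb G β x i)

lemma reducedMap_monotoneOn (hβ : β ∈ Set.Icc (0 : ℝ) 1) (hδ : 0 < δ) (hc : 0 ≤ c) :
    MonotoneOn (reducedMap G β δ c) (Set.Icc 0 1) := fun _ hx _ hy hxy i =>
  div_add_mul_monotoneOn hδ hc (infectionProb_nonneg hβ hx i) (infectionProb_nonneg hβ hy i)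
    (infectionProb_monotoneOn hβ hx hy hxy i)

lemma reducedMap_lt_inv (hβ : β ∈ Set.Icc (0 : ℝ) 1) (hδ : 0 < δ) (hc : 0 < c) {x : V → ℝ}
    (hx : x ∈ Set.Icc 0 1) (i : V) : reducedMap G β δ c x i < c⁻¹ :=
  div_add_mul_lt_inv hδ hc (infectionProb_nonneg hβ hx i)

lemma reducedMap_pos_of_adj (hβ : β ∈ Set.Ioc (0 : ℝ) 1) (hδ : 0 < δ) (hc : 0 ≤ c)
    {x : V → ℝ} (hx : x ∈ Set.Icc 0 1) {i j : V} (hij : G.Adj i j) (hxj : 0 < x j) :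
    0 < reducedMap G β δ c x i := by
  have := (mul_pos hβ.1 hxj).trans_le (mul_le_infectionProb (Set.Ioc_subset_Icc_self hβ) hx hij)
  exact div_pos this (by positivity)

lemma mul_reducedMap_lt (hβ : β ∈ Set.Icc (0 : ℝ) 1) (hδ : 0 < δ) (hc : 0 < c) {x : V → ℝ}
    (hx : x ∈ Set.Icc 0 1) {s : ℝ} (hs : s ∈ Set.Ioo (0 : ℝ) 1) {i : V}
    (hpos : 0 < reducedMap G β δ c x i) :
    s * reducedMap G β δ c x i < reducedMap G β δ c (s • x) i := by
  have hg := infectionProb_nonneg (G := G) hβ hx i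
  have hgpos : 0 < infectionProb G β x i := by
    by_contra! h
    simp [reducedMap, le_antisymm h hg] at hpos
  have hsx : s • x ∈ Set.Icc (0 : V → ℝ) 1 :=
    ⟨smul_nonneg hs.1.le hx.1, fun j => by
      simpa using mul_le_one₀ hs.2.le (hx.1 j) (hx.2 j)⟩
  calc s * reducedMap G β δ c x i
      < s * infectionProb G β x i / (δ + c * (s * infectionProb G β x i)) :=
        mul_div_add_mul_lt hδ hc hgpos hs
    _ ≤ reducedMap G β δ c (s • x) i :=
        div_add_mul_monotoneOn hδ hc.le (mul_nonneg hs.1.le hg) (infectionProb_nonneg hβ hsx i)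
          (mul_infectionProb_le hβ hx (Set.Ioo_subset_Icc_self hs) i)

lemma exists_pos_le_reducedMap (hβ : β ∈ Set.Icc (0 : ℝ) 1) (hδ : 0 < δ) (hc : 0 ≤ c) {lam : ℝ}
    (hlam : δ < β * lam) {w : V → ℝ} (hw : ∀ i, 0 < w i)
    (heig : ∀ i, ∑ j ∈ G.neighborFinset i, w j = lam * w i) :
    ∃ a : V → ℝ, (∀ i, 0 < a i) ∧ a ≤ 1 ∧ a ≤ reducedMap G β δ c a := by
  set b := β * lam
  have hb : 0 < b := hδ.trans hlam
  set K := (b - δ) / (b + c)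
  have hm : 0 < min 1 (K / b) :=
    lt_min one_pos (div_pos (div_pos (by linarith) (by linarith)) hb)
  obtain ⟨ε, hεw, hε⟩ : ∃ ε : ℝ, (∀ i, ε * w i ≤ min 1 (K / b)) ∧ 0 < ε := by
    refine ((Filter.eventually_all.2 fun i => ?_).and self_mem_nhdsWithin).exists
      (f := 𝓝[>] (0 : ℝ))
    refine Filter.Tendsto.eventually_le_const hm (Filter.Tendsto.mono_left ?_ nhdsWithin_le_nhds)
    simpa using (continuous_mul_const (w i)).tendsto 0
  have ha : ε • w ∈ Set.Icc (0 : V → ℝ) 1 :=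
    ⟨fun j => (mul_pos hε (hw j)).le, fun j => (hεw j).trans (min_le_left _ _)⟩
  refine ⟨ε • w, fun i => mul_pos hε (hw i), ha.2, fun i => ?_⟩
  have hS : β * ∑ j ∈ G.neighborFinset i, (ε • w) j = b * (ε * w i) := by
    simp only [Pi.smul_apply, smul_eq_mul, ← Finset.mul_sum, heig, b]
    ring
  have hSK : (b + c) * (b * (ε * w i)) ≤ b - δ := by
    have : b * (ε * w i) ≤ K :=
      (le_div_iff₀' hb).mp ((hεw i).trans (min_le_right _ _))
    calc (b + c) * (b * (ε * w i)) ≤ (b + c) * K := by gcongr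
      _ = b - δ := mul_div_cancel₀ _ (by linarith)
  calc (ε • w) i = b * (ε * w i) / b := by rw [mul_div_cancel_left₀ _ hb.ne']; rfl
    _ ≤ reducedMap G β δ c (ε • w) i :=
      div_le_div_add_mul_of_sub_sq_le hδ hlam hc
        (mul_nonneg hb.le (mul_pos hε (hw i)).le) hSK
        (hS ▸ sub_sq_le_infectionProb hβ ha i)

lemma SimpleGraph.Connected.pos_of_isFixedPt_reducedMap (hG : G.Connected)
    (hβ : β ∈ Set.Ioc (0 : ℝ) 1) (hδ : 0 < δ) (hc : 0 ≤ c) {x : V → ℝ}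
    (hx : x ∈ Set.Icc 0 1) (hx0 : x ≠ 0) (hfix : Function.IsFixedPt (reducedMap G β δ c) x)
    (i : V) : 0 < x i := by
  obtain ⟨j, hj⟩ : ∃ j, 0 < x j := by
    by_contra! h
    exact hx0 (le_antisymm h hx.1)
  exact hG.preconnected.forall_of_adj (P := fun i => 0 < x i)
    (fun i k hik hk => (reducedMap_pos_of_adj hβ hδ hc hx hik hk).trans_eq (congrFun hfix i)) hj i

lemma eq_of_isFixedPt_reducedMap (hβ : β ∈ Set.Icc (0 : ℝ) 1) (hδ : 0 < δ) (hc : 0 < c)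
    {x y : V → ℝ} (hx : x ∈ Set.Icc 0 1) (hy : y ∈ Set.Icc 0 1) (hxpos : ∀ i, 0 < x i)
    (hypos : ∀ i, 0 < y i) (hfx : Function.IsFixedPt (reducedMap G β δ c) x)
    (hfy : Function.IsFixedPt (reducedMap G β δ c) y) : x = y := by
  have hmono := reducedMap_monotoneOn (G := G) hβ hδ hc.le
  have hsub : ∀ z ∈ Set.Icc (0 : V → ℝ) 1, ∀ s ∈ Set.Ioo (0 : ℝ) 1, ∀ i,
      0 < reducedMap G β δ c z i → s * reducedMap G β δ c z i < reducedMap G β δ c (s • z) i :=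
    fun _ hz _ hs _ => mul_reducedMap_lt hβ hδ hc hz hs
  exact le_antisymm (isFixedPt_le_of_mul_lt hmono hsub hx hy hxpos hypos hfx hfy)
    (isFixedPt_le_of_mul_lt hmono hsub hy hx hypos hxpos hfy hfx)

end Infection

lemma SimpleGraph.Connected.exists_pos_isFixedPt_reducedMap {n : ℕ} {G : SimpleGraph (Fin n)}
    [DecidableRel G.Adj] (hG : G.Connected) {β δ c : ℝ} (hβ : β ∈ Set.Icc (0 : ℝ) 1)
    (hδ : 0 < δ) (hc : 1 ≤ c) (hlam : δ < β * lamMax (G.adjMatrix ℝ)) :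
    ∃ x ∈ Set.Icc (0 : Fin n → ℝ) 1, (∀ i, 0 < x i) ∧
      Function.IsFixedPt (reducedMap G β δ c) x := by
  obtain ⟨w, hw, heig⟩ := hG.exists_pos_mulVec_adjMatrix_eq_lamMax_smul
  obtain ⟨a, ha, ha1, hle⟩ := exists_pos_le_reducedMap hβ hδ (zero_le_one.trans hc) hlam hw
    fun i => by simpa [SimpleGraph.adjMatrix_mulVec_apply] using congrFun heig i
  have hmono := reducedMap_monotoneOn (G := G) hβ hδ (zero_le_one.trans hc)
  have hsub : Set.Icc a 1 ⊆ Set.Icc 0 1 := Set.Icc_subset_Icc_left fun i => (ha i).le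
  obtain ⟨x, hx, hfix⟩ := exists_isFixedPt_mem_Icc ha1 (hmono.mono hsub) fun x hx =>
    ⟨hle.trans (hmono (hsub (Set.left_mem_Icc.2 ha1)) (hsub hx) hx.1), fun i =>
      (reducedMap_lt_inv hβ hδ (by linarith) (hsub hx) i).le.trans (inv_le_one_of_one_le₀ hc)⟩
  exact ⟨x, hsub hx, fun i => (ha i).trans_le (hx.1 i), hfix⟩

lemma sirsF_eq_self_iff {n : ℕ} {G : SimpleGraph (Fin n)} [DecidableRel G.Adj] {β δ γ : ℝ}
    (hβ : β ∈ Set.Icc (0 : ℝ) 1) (hδ : 0 < δ) (hγ : 0 < γ) {p : (Fin n → ℝ) × (Fin n → ℝ)}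
    (hp : p.2 ∈ Set.Icc 0 1) :
    sirsF G β δ γ p = p ↔
      p.1 = (δ / γ) • p.2 ∧ Function.IsFixedPt (reducedMap G β δ (1 + δ / γ)) p.2 := by
  obtain ⟨r, x⟩ := p
  simp only [sirsF, Prod.mk.injEq, Function.IsFixedPt, funext_iff, Pi.smul_apply, smul_eq_mul]
  have hR : (∀ i, (1 - γ) * r i + δ * x i = r i) ↔ ∀ i, r i = δ / γ * x i :=
    forall_congr' fun i => by
      field_simp
      constructor <;> intro h <;> linarith
  rw [hR]
  refine and_congr_right fun hr => forall_congr' fun i => ?_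
  have hden : 0 < δ + (1 + δ / γ) * infectionProb G β x i := by
    have := infectionProb_nonneg (G := G) hβ hp i
    positivity
  rw [hr i, reducedMap, div_eq_iff hden.ne', infectionProb]
  constructor <;> intro h <;> linear_combination h

lemma smul_mk_mem_sirsD {n : ℕ} {r : ℝ} (hr : 0 ≤ r) {x : Fin n → ℝ} (hx0 : 0 ≤ x)
    (hx : ∀ i, x i ≤ (1 + r)⁻¹) : (r • x, x) ∈ sirsD n := by
  have hsum : ∀ i, r * x i + x i ≤ 1 := fun i => by
    have := mul_le_mul_of_nonneg_left (hx i) (by linarith : (0 : ℝ) ≤ 1 + r)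
    rw [mul_inv_cancel₀ (by linarith)] at this
    linarith
  refine ⟨⟨smul_nonneg hr hx0, fun i => ?_⟩, ⟨hx0, fun i => ?_⟩, hsum⟩
  · simpa using (le_add_of_nonneg_right (hx0 i)).trans (hsum i)
  · simpa using (le_add_of_nonneg_left (mul_nonneg hr (hx0 i))).trans (hsum i)

theorem stmt13_general {n : ℕ} (G : SimpleGraph (Fin n)) [DecidableRel G.Adj]
    (hG : G.Connected) (β δ γ : ℝ) (hβ : β ∈ Set.Ioo (0 : ℝ) 1)
    (hδ : δ ∈ Set.Ioo (0 : ℝ) 1) (hγ : γ ∈ Set.Ioo (0 : ℝ) 1)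
    (h : 1 < β * lamMax (G.adjMatrix ℝ) / δ) :
    ∃ p : (Fin n → ℝ) × (Fin n → ℝ), p ∈ sirsD n ∧ p ≠ 0 ∧ sirsF G β δ γ p = p ∧
      (∀ q ∈ sirsD n, q ≠ 0 → sirsF G β δ γ q = q → q = p) ∧
      (∀ i, p.1 i = (δ / γ) * p.2 i) ∧
      (∀ i, 0 < p.1 i ∧ 0 < p.2 i) := by
  have hβ' : β ∈ Set.Icc (0 : ℝ) 1 := Set.Ioo_subset_Icc_self hβ
  have hδγ : 0 < δ / γ := div_pos hδ.1 hγ.1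
  have hc : 1 ≤ 1 + δ / γ := le_add_of_nonneg_right hδγ.le
  obtain ⟨x, hx, hxpos, hxfix⟩ :=
    hG.exists_pos_isFixedPt_reducedMap hβ' hδ.1 hc ((one_lt_div hδ.1).mp h)
  have hxc : ∀ i, x i ≤ (1 + δ / γ)⁻¹ := fun i =>
    (congrFun hxfix i).ge.trans (reducedMap_lt_inv hβ' hδ.1 (by linarith) hx i).le
  refine ⟨((δ / γ) • x, x), smul_mk_mem_sirsD hδγ.le hx.1 hxc,
    fun h0 => (hxpos hG.nonempty.some).ne' (congrFun (congrArg Prod.snd h0) _),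
    (sirsF_eq_self_iff hβ' hδ.1 hγ.1 hx).2 ⟨rfl, hxfix⟩, ?_, fun _ => rfl,
    fun i => ⟨mul_pos hδγ (hxpos i), hxpos i⟩⟩
  rintro ⟨r, y⟩ hq hq0 hqfix
  obtain ⟨rfl, hyfix⟩ : r = (δ / γ) • y ∧ Function.IsFixedPt _ y :=
    (sirsF_eq_self_iff hβ' hδ.1 hγ.1 hq.2.1).1 hqfix
  have hy : y ∈ Set.Icc 0 1 := hq.2.1
  have hy0 : y ≠ 0 := fun h0 => hq0 (by simp [h0])
  have hypos := hG.pos_of_isFixedPt_reducedMap ⟨hβ.1, hβ.2.le⟩ hδ.1 (by linarith) hy hy0 hyfix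
  rw [eq_of_isFixedPt_reducedMap hβ' hδ.1 (by linarith) hy hx hypos hxpos hyfix hxfix]

/-- If `β λmax(A)/δ > 1`, the SIRS nonlinear map `F` has exactly one fixed
point in `D` other than the origin; it satisfies `P_R* = (δ/γ) P_I*` componentwise and all
its entries are strictly positive. -/
theorem stmt13 {n : ℕ} (hn : 1 ≤ n) (G : SimpleGraph (Fin n)) [DecidableRel G.Adj]
    (hG : G.Connected) (β δ γ : ℝ) (hβ : β ∈ Set.Ioo (0 : ℝ) 1)
    (hδ : δ ∈ Set.Ioo (0 : ℝ) 1) (hγ : γ ∈ Set.Ioo (0 : ℝ) 1)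
    (h : 1 < β * lamMax (G.adjMatrix ℝ) / δ) :
    ∃ p : (Fin n → ℝ) × (Fin n → ℝ), p ∈ sirsD n ∧ p ≠ 0 ∧ sirsF G β δ γ p = p ∧
      (∀ q ∈ sirsD n, q ≠ 0 → sirsF G β δ γ q = q → q = p) ∧
      (∀ i, p.1 i = (δ / γ) * p.2 i) ∧
      (∀ i, 0 < p.1 i ∧ 0 < p.2 i) :=
  stmt13_general G hG β δ γ hβ hδ hγ h
end

section
/- Consider the SIRS Markov chain on {0,1,2}^n with transition matrix S, and let π be the point mass on the all-susceptible state (its unique stationary distribution). Let M be the block matrix [[(1−γ)I_n, δI_n], [0_{n×n}, (1−δ)I_n + βA]]. Then for every t ≥ 0 and every initial distribution μ, ‖μS^t − π‖_TV ≤ 1_{2n}ᵀ M^t 1_{2n} ≤ 2n‖M‖^t, where ‖M‖ is the spectral norm of M. Consequently, if ‖M‖ < 1, then for every ε ∈ (0,1) the mixing time satisfies t_mix(ε) ≤ log(2n/ε)/(−log‖M‖); in particular the mixing time is O(log n). -/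
/-!
Let `q_t ∈ ℝ^{2n}` hold the probabilities that each node is recovered (first block) or infected
(second block) at time `t`. One step of the chain gives `q_{t+1} ≤ M q_t` entrywise: recovery and
loss of immunity act linearly, and a susceptible node with `m` infected neighbours is infected with
probability `1 - (1 - β) ^ m ≤ β m`. As `M` is entrywise nonnegative this iterates to
`q_t ≤ Mᵗ q_0`. The distance from `μ Sᵗ` to the all-susceptible point mass is the probability that
some node is not susceptible, hence at most `∑ q_t ≤ 1ᵀ Mᵗ q_0`, and Cauchy–Schwarz turns
`1ᵀ Mᵗ v` into `‖1‖ ‖M‖ᵗ ‖v‖`.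
-/

open Matrix Finset

/-- Number of infected neighbors of node `i` in state `X` (infected = state `1`). -/
def numInf3 {n : ℕ} (G : SimpleGraph (Fin n)) [DecidableRel G.Adj]
    (X : Fin n → Fin 3) (i : Fin n) : ℕ :=
  ((G.neighborFinset i).filter (fun j => X j = 1)).card

/-- The `3^n × 3^n` transition matrix of the SIRS Markov chain
(`0` = susceptible, `1` = infected, `2` = recovered). -/
noncomputable def sirsTrans {n : ℕ} (G : SimpleGraph (Fin n)) [DecidableRel G.Adj]
    (β δ γ : ℝ) : Matrix (Fin n → Fin 3) (Fin n → Fin 3) ℝ :=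
  Matrix.of fun X Y => ∏ i,
    if X i = 0 then
      (if Y i = 0 then (1 - β) ^ numInf3 G X i
       else if Y i = 1 then 1 - (1 - β) ^ numInf3 G X i
       else 0)
    else if X i = 1 then
      (if Y i = 0 then 0 else if Y i = 1 then 1 - δ else δ)
    else
      (if Y i = 0 then γ else if Y i = 1 then 0 else 1 - γ)

/-- The point mass on the all-susceptible state. -/
noncomputable def sirsPi (n : ℕ) : (Fin n → Fin 3) → ℝ :=
  fun X => if X = (fun _ => (0 : Fin 3)) then 1 else 0

/-- Total variation distance. -/
noncomputable def tvDist {α : Type*} [Fintype α] (μ ν : α → ℝ) : ℝ :=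
  (1 / 2) * ∑ x, |μ x - ν x|

/-- The block matrix `M = [[(1−γ)I, δI], [0, (1−δ)I + βA]]`. -/
noncomputable def sirsM {n : ℕ} (G : SimpleGraph (Fin n)) [DecidableRel G.Adj]
    (β δ γ : ℝ) : Matrix (Fin n ⊕ Fin n) (Fin n ⊕ Fin n) ℝ :=
  Matrix.fromBlocks ((1 - γ) • (1 : Matrix (Fin n) (Fin n) ℝ))
    (δ • (1 : Matrix (Fin n) (Fin n) ℝ)) 0
    ((1 - δ) • (1 : Matrix (Fin n) (Fin n) ℝ) + β • G.adjMatrix ℝ)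

/-- The spectral norm (`ℓ²`-operator norm) of a real matrix. -/
noncomputable def specNorm {m : Type*} [Fintype m] [DecidableEq m] (M : Matrix m m ℝ) : ℝ :=
  ‖LinearMap.toContinuousLinearMap (Matrix.toEuclideanLin M)‖

/-- The mixing time `t_mix(ε) = min {t : sup_μ ‖μ Sᵗ − π‖_TV ≤ ε}` of the SIRS chain. -/
noncomputable def sirsMix {n : ℕ} (G : SimpleGraph (Fin n)) [DecidableRel G.Adj]
    (β δ γ ε : ℝ) : ℕ :=
  sInf {t : ℕ | ∀ μ : (Fin n → Fin 3) → ℝ, (∀ X, 0 ≤ μ X) → ∑ X, μ X = 1 →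
    tvDist (μ ᵥ* (sirsTrans G β δ γ ^ t)) (sirsPi n) ≤ ε}

open scoped Matrix.Norms.L2Operator

section ProductKernel

variable {ι α R : Type*} [Fintype ι] [DecidableEq ι] [Fintype α] [CommSemiring R]

theorem sum_prod_eq_one (f : ι → α → R) (hf : ∀ i, ∑ a, f i a = 1) :
    ∑ x : ι → α, ∏ i, f i (x i) = 1 := by
  rw [← Fintype.prod_sum]
  simp [hf]

theorem sum_prod_mul_apply (f : ι → α → R) (hf : ∀ i, ∑ a, f i a = 1) (g : α → R) (j : ι) :
    ∑ x : ι → α, (∏ i, f i (x i)) * g (x j) = ∑ a, f j a * g a := by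
  have hprod (x : ι → α) :
      (∏ i, f i (x i)) * g (x j) = ∏ i, f i (x i) * if i = j then g (x i) else 1 := by
    rw [Finset.prod_mul_distrib, Finset.prod_ite_eq' _ j, if_pos (Finset.mem_univ j)]
  have hsum (i : ι) :
      ∑ a, f i a * (if i = j then g a else 1) = if i = j then ∑ a, f j a * g a else 1 := by
    split_ifs with h
    · subst h; rfl
    · simp [hf]
  simp_rw [hprod]
  rw [← Fintype.prod_sum fun i a => f i a * if i = j then g a else 1]
  simp_rw [hsum, Finset.prod_ite_eq', if_pos (Finset.mem_univ j)]

end ProductKernel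

section MatrixNorm

variable {m : Type*} [Fintype m]

theorem Matrix.mulVec_le_mulVec_of_nonneg {l R : Type*} [Semiring R] [PartialOrder R]
    [IsOrderedRing R] {A : Matrix l m R} (hA : ∀ i j, 0 ≤ A i j) {u v : m → R}
    (huv : ∀ j, u j ≤ v j) (i : l) : (A *ᵥ u) i ≤ (A *ᵥ v) i :=
  Finset.sum_le_sum fun j _ => mul_le_mul_of_nonneg_left (huv j) (hA i j)

theorem norm_toLp_one : ‖WithLp.toLp 2 (1 : m → ℝ)‖ = √(Fintype.card m) := by
  simp [EuclideanSpace.norm_eq]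

variable [DecidableEq m]

theorem specNorm_eq_l2_opNorm (A : Matrix m m ℝ) : specNorm A = ‖A‖ := rfl

theorem Matrix.l2_opNorm_pow_le {𝕜 : Type*} [RCLike 𝕜] (A : Matrix m m 𝕜) :
    ∀ t : ℕ, ‖A ^ t‖ ≤ ‖A‖ ^ t
  | 0 => by
    rw [pow_zero, pow_zero, cstar_norm_def, map_one]
    exact ContinuousLinearMap.norm_id_le
  | t + 1 => norm_pow_le' A t.succ_pos

theorem Matrix.dotProduct_mulVec_le_l2_opNorm (A : Matrix m m ℝ) (x y : m → ℝ) :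
    x ⬝ᵥ A *ᵥ y ≤ ‖WithLp.toLp 2 x‖ * ‖A‖ * ‖WithLp.toLp 2 y‖ := by
  calc x ⬝ᵥ A *ᵥ y = inner ℝ (WithLp.toLp 2 x) (toEuclideanCLM (𝕜 := ℝ) A (WithLp.toLp 2 y)) :=
        (inner_toEuclideanCLM A _ _).symm
    _ ≤ ‖WithLp.toLp 2 x‖ * ‖toEuclideanCLM (𝕜 := ℝ) A (WithLp.toLp 2 y)‖ :=
        real_inner_le_norm _ _
    _ ≤ ‖WithLp.toLp 2 x‖ * (‖A‖ * ‖WithLp.toLp 2 y‖) :=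
        mul_le_mul_of_nonneg_left ((toEuclideanCLM (𝕜 := ℝ) A).le_opNorm _) (norm_nonneg _)
    _ = ‖WithLp.toLp 2 x‖ * ‖A‖ * ‖WithLp.toLp 2 y‖ := (mul_assoc _ _ _).symm

theorem Matrix.sum_sum_le_card_mul_l2_opNorm (A : Matrix m m ℝ) :
    ∑ i, ∑ j, A i j ≤ Fintype.card m * ‖A‖ := by
  have h := A.dotProduct_mulVec_le_l2_opNorm 1 1
  rw [norm_toLp_one, mul_comm √_ ‖A‖, mul_assoc, Real.mul_self_sqrt (Nat.cast_nonneg _)] at h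
  simpa [dotProduct, mulVec, mul_comm] using h

end MatrixNorm

theorem tvDist_ite_eq_one_sub {α : Type*} [Fintype α] [DecidableEq α] {ν : α → ℝ}
    (hν : ∀ x, 0 ≤ ν x) (hν1 : ∑ x, ν x = 1) (a : α) :
    tvDist ν (fun x => if x = a then 1 else 0) = 1 - ν a := by
  have hrest : ∑ x ∈ univ.erase a, |ν x - if x = a then 1 else 0| = 1 - ν a := by
    rw [Finset.sum_congr rfl fun x hx => by rw [if_neg (Finset.ne_of_mem_erase hx), sub_zero,
      abs_of_nonneg (hν x)], Finset.sum_erase_eq_sub (Finset.mem_univ a), hν1]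
  have hνa : ν a ≤ 1 := hν1 ▸ Finset.single_le_sum (fun x _ => hν x) (Finset.mem_univ a)
  rw [tvDist, ← Finset.add_sum_erase _ _ (Finset.mem_univ a), hrest, if_pos rfl,
    abs_of_nonpos (by linarith)]
  ring

theorem one_sub_one_sub_pow_le {β : ℝ} (hβ : β ≤ 2) (m : ℕ) : 1 - (1 - β) ^ m ≤ m * β := by
  have := one_add_mul_le_pow (a := -β) (by linarith) m
  rw [← sub_eq_add_neg] at this
  linarith

theorem pow_floor_log_div_neg_log_le {r a : ℝ} (hr0 : 0 < r) (hr1 : r < 1) (ha : 0 < a) :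
    r ^ ⌊Real.log a / -Real.log r⌋₊ ≤ (a * r)⁻¹ := by
  set L := Real.log a / -Real.log r with hL
  have hlog : Real.log r ≠ 0 := (Real.log_neg hr0 hr1).ne
  have hrL : r ^ L = a⁻¹ := by
    rw [Real.rpow_def_of_pos hr0, show Real.log r * L = -Real.log a by rw [hL]; field_simp,
      Real.exp_neg, Real.exp_log ha]
  calc r ^ ⌊L⌋₊ = r ^ (⌊L⌋₊ : ℝ) := (Real.rpow_natCast r _).symm
    _ ≤ r ^ (L - 1) :=
        Real.rpow_le_rpow_of_exponent_ge hr0 hr1.le (by linarith [Nat.lt_floor_add_one L])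
    _ = (a * r)⁻¹ := by rw [Real.rpow_sub_one hr0.ne', hrL, mul_inv, div_eq_mul_inv]

section Transition

variable {n : ℕ} (G : SimpleGraph (Fin n)) [DecidableRel G.Adj] (β δ γ : ℝ)

noncomputable def sirsLocal (X : Fin n → Fin 3) (i : Fin n) (y : Fin 3) : ℝ :=
  if X i = 0 then
    (if y = 0 then (1 - β) ^ numInf3 G X i
     else if y = 1 then 1 - (1 - β) ^ numInf3 G X i else 0)
  else if X i = 1 then (if y = 0 then 0 else if y = 1 then 1 - δ else δ)
  else (if y = 0 then γ else if y = 1 then 0 else 1 - γ)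

theorem sirsTrans_apply (X Y : Fin n → Fin 3) :
    sirsTrans G β δ γ X Y = ∏ i, sirsLocal G β δ γ X i (Y i) := rfl

theorem sum_sirsLocal (X : Fin n → Fin 3) (i : Fin n) : ∑ y, sirsLocal G β δ γ X i y = 1 := by
  simp only [Fin.sum_univ_three, sirsLocal]
  split_ifs <;> simp_all

variable {β δ γ}

theorem sirsLocal_nonneg (hβ : β ∈ Set.Icc 0 1) (hδ : δ ∈ Set.Icc 0 1) (hγ : γ ∈ Set.Icc 0 1)
    (X : Fin n → Fin 3) (i : Fin n) (y : Fin 3) : 0 ≤ sirsLocal G β δ γ X i y := by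
  obtain ⟨hβ0, hβ1⟩ := hβ
  have : (1 - β) ^ numInf3 G X i ≤ 1 := pow_le_one₀ (by linarith) (by linarith)
  have : 0 ≤ (1 - β) ^ numInf3 G X i := pow_nonneg (by linarith) _
  unfold sirsLocal
  split_ifs <;> linarith [hδ.1, hδ.2, hγ.1, hγ.2]

theorem sirsTrans_mem_rowStochastic (hβ : β ∈ Set.Icc 0 1) (hδ : δ ∈ Set.Icc 0 1)
    (hγ : γ ∈ Set.Icc 0 1) : sirsTrans G β δ γ ∈ rowStochastic ℝ (Fin n → Fin 3) :=
  mem_rowStochastic_iff_sum.2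
    ⟨fun X Y => by
      rw [sirsTrans_apply]
      exact Finset.prod_nonneg fun i _ => sirsLocal_nonneg G hβ hδ hγ X i (Y i),
     fun X => sum_prod_eq_one _ (sum_sirsLocal G β δ γ X)⟩

theorem sirsTrans_zero_apply (Y : Fin n → Fin 3) :
    sirsTrans G β δ γ (fun _ => 0) Y = if Y = (fun _ => 0) then 1 else 0 := by
  have hloc (i : Fin n) : sirsLocal G β δ γ (fun _ => 0) i (Y i) = if Y i = 0 then 1 else 0 := by
    simp [sirsLocal, numInf3]
  simp only [sirsTrans_apply, hloc, Fintype.prod_boole]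
  by_cases hY : ∀ i, Y i = 0 <;> simp [hY, funext_iff]

theorem sirsPi_vecMul_sirsTrans : sirsPi n ᵥ* sirsTrans G β δ γ = sirsPi n := by
  have hπ : sirsPi n = Pi.single (fun _ => 0) 1 := by
    ext X
    simp [sirsPi, Pi.single_apply]
  ext Y
  rw [hπ, single_one_vecMul, row_apply, sirsTrans_zero_apply, Pi.single_apply]

end Transition

section Marginal

variable {n : ℕ}

/-- Coordinate `Sum.inl i` flags node `i` as recovered and `Sum.inr i` as infected, in the block
order of `sirsM`. -/
def sirsIndicator (X : Fin n → Fin 3) : Fin n ⊕ Fin n → ℝ :=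
  Sum.elim (fun i => if X i = 2 then 1 else 0) (fun i => if X i = 1 then 1 else 0)

theorem sirsIndicator_nonneg (X : Fin n → Fin 3) (k : Fin n ⊕ Fin n) :
    0 ≤ sirsIndicator X k := by
  rcases k with i | i <;> simp only [sirsIndicator, Sum.elim_inl, Sum.elim_inr] <;> split_ifs <;>
    norm_num

theorem sirsIndicator_le_one (X : Fin n → Fin 3) (k : Fin n ⊕ Fin n) :
    sirsIndicator X k ≤ 1 := by
  rcases k with i | i <;> simp only [sirsIndicator, Sum.elim_inl, Sum.elim_inr] <;> split_ifs <;>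
    norm_num

theorem sum_sirsIndicator (X : Fin n → Fin 3) :
    ∑ k, sirsIndicator X k = #{i | X i ≠ 0} := by
  rw [Fintype.sum_sum_type, ← Finset.sum_add_distrib, Finset.card_filter, Nat.cast_sum]
  refine Finset.sum_congr rfl fun i _ => ?_
  obtain h | h | h : X i = 0 ∨ X i = 1 ∨ X i = 2 := by omega
  all_goals simp [sirsIndicator, h]

noncomputable def sirsMarginal (ν : (Fin n → Fin 3) → ℝ) : Fin n ⊕ Fin n → ℝ :=
  ν ᵥ* Matrix.of sirsIndicator

theorem sirsMarginal_apply (ν : (Fin n → Fin 3) → ℝ) (k : Fin n ⊕ Fin n) :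
    sirsMarginal ν k = ∑ X, ν X * sirsIndicator X k := rfl

theorem sum_sirsMarginal (ν : (Fin n → Fin 3) → ℝ) :
    ∑ k, sirsMarginal ν k = ∑ X, ν X * #{i | X i ≠ 0} := by
  simp_rw [sirsMarginal_apply, ← sum_sirsIndicator, Finset.mul_sum]
  exact Finset.sum_comm

variable {ν : (Fin n → Fin 3) → ℝ}

theorem sirsMarginal_nonneg (hν : ∀ X, 0 ≤ ν X) (k : Fin n ⊕ Fin n) : 0 ≤ sirsMarginal ν k :=
  Finset.sum_nonneg fun X _ => mul_nonneg (hν X) (sirsIndicator_nonneg X k)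

theorem sirsMarginal_le_one (hν : ∀ X, 0 ≤ ν X) (hν1 : ∑ X, ν X = 1) (k : Fin n ⊕ Fin n) :
    sirsMarginal ν k ≤ 1 :=
  hν1 ▸ Finset.sum_le_sum fun X _ =>
    mul_le_of_le_one_right (hν X) (sirsIndicator_le_one X k)

theorem sum_sirsMarginal_le (hν : ∀ X, 0 ≤ ν X) (hν1 : ∑ X, ν X = 1) :
    ∑ k, sirsMarginal ν k ≤ n := by
  rw [sum_sirsMarginal]
  calc ∑ X, ν X * #{i | X i ≠ 0} ≤ ∑ X, ν X * n :=
        Finset.sum_le_sum fun X _ => mul_le_mul_of_nonneg_left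
          (by exact_mod_cast (Finset.card_filter_le _ _).trans (Finset.card_fin n).le) (hν X)
    _ = n := by rw [← Finset.sum_mul, hν1, one_mul]

theorem norm_toLp_sirsMarginal_le (hν : ∀ X, 0 ≤ ν X) (hν1 : ∑ X, ν X = 1) :
    ‖WithLp.toLp 2 (sirsMarginal ν)‖ ≤ √n := by
  rw [EuclideanSpace.norm_eq]
  refine Real.sqrt_le_sqrt (le_trans (Finset.sum_le_sum fun k _ => ?_)
    (sum_sirsMarginal_le hν hν1))
  rw [Real.norm_eq_abs, sq_abs, sq]
  exact mul_le_of_le_one_left (sirsMarginal_nonneg hν k) (sirsMarginal_le_one hν hν1 k)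

theorem tvDist_sirsPi_le (hν : ∀ X, 0 ≤ ν X) (hν1 : ∑ X, ν X = 1) :
    tvDist ν (sirsPi n) ≤ ∑ k, sirsMarginal ν k := by
  have hcount (X : Fin n → Fin 3) (hX : X ≠ fun _ => 0) : (1 : ℝ) ≤ #{i | X i ≠ 0} := by
    obtain ⟨i, hi⟩ := Function.ne_iff.1 hX
    exact_mod_cast Finset.card_pos.2 ⟨i, by simpa using hi⟩
  calc tvDist ν (sirsPi n) = 1 - ν (fun _ => 0) := tvDist_ite_eq_one_sub hν hν1 _
    _ = ∑ X ∈ univ.erase (fun _ => 0), ν X := by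
        rw [Finset.sum_erase_eq_sub (Finset.mem_univ _), hν1]
    _ ≤ ∑ X ∈ univ.erase (fun _ => 0), ν X * #{i | X i ≠ 0} :=
        Finset.sum_le_sum fun X hX =>
          le_mul_of_one_le_right (hν X) (hcount X (Finset.ne_of_mem_erase hX))
    _ ≤ ∑ X, ν X * #{i | X i ≠ 0} :=
        Finset.sum_le_sum_of_subset_of_nonneg (Finset.subset_univ _) fun X _ _ =>
          mul_nonneg (hν X) (Nat.cast_nonneg _)
    _ = ∑ k, sirsMarginal ν k := (sum_sirsMarginal ν).symm

end Marginal

section Drift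

variable {n : ℕ} (G : SimpleGraph (Fin n)) [DecidableRel G.Adj] {β δ γ : ℝ}

theorem sirsM_mulVec_inl (v : Fin n ⊕ Fin n → ℝ) (i : Fin n) :
    (sirsM G β δ γ *ᵥ v) (Sum.inl i) = (1 - γ) * v (Sum.inl i) + δ * v (Sum.inr i) := by
  simp [sirsM, fromBlocks_mulVec, smul_mulVec]

theorem sirsM_mulVec_inr (v : Fin n ⊕ Fin n → ℝ) (i : Fin n) :
    (sirsM G β δ γ *ᵥ v) (Sum.inr i) =
      (1 - δ) * v (Sum.inr i) + β * ∑ j ∈ G.neighborFinset i, v (Sum.inr j) := by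
  simp [sirsM, fromBlocks_mulVec, smul_mulVec, add_mulVec]

theorem sirsM_nonneg (hβ : 0 ≤ β) (hδ : δ ∈ Set.Icc 0 1) (hγ : γ ≤ 1)
    (k l : Fin n ⊕ Fin n) : 0 ≤ sirsM G β δ γ k l := by
  obtain ⟨hδ0, hδ1⟩ := hδ
  rcases k with i | i <;> rcases l with j | j <;>
    simp only [sirsM, fromBlocks_apply₁₁, fromBlocks_apply₁₂, fromBlocks_apply₂₁,
      fromBlocks_apply₂₂, Matrix.add_apply, Matrix.smul_apply, one_apply, smul_eq_mul,
      Matrix.zero_apply, SimpleGraph.adjMatrix_apply, le_refl] <;>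
    split_ifs <;> simp only [mul_one, mul_zero, add_zero, zero_add] <;> linarith

theorem sum_neighborFinset_sirsIndicator (X : Fin n → Fin 3) (i : Fin n) :
    ∑ j ∈ G.neighborFinset i, sirsIndicator X (Sum.inr j) = numInf3 G X i := by
  simp [sirsIndicator, numInf3, Finset.sum_boole]

theorem sum_sirsTrans_mul_sirsIndicator (X : Fin n → Fin 3) (i : Fin n) :
    ∑ Y, sirsTrans G β δ γ X Y * sirsIndicator Y (Sum.inl i) = sirsLocal G β δ γ X i 2 ∧
    ∑ Y, sirsTrans G β δ γ X Y * sirsIndicator Y (Sum.inr i) = sirsLocal G β δ γ X i 1 := by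
  simp only [sirsTrans_apply, sirsIndicator, Sum.elim_inl, Sum.elim_inr]
  rw [sum_prod_mul_apply _ (sum_sirsLocal G β δ γ X) (fun y => if y = 2 then 1 else 0),
    sum_prod_mul_apply _ (sum_sirsLocal G β δ γ X) (fun y => if y = 1 then 1 else 0)]
  simp

theorem sum_sirsTrans_mul_sirsIndicator_le (hβ : β ∈ Set.Icc 0 1) (X : Fin n → Fin 3)
    (k : Fin n ⊕ Fin n) :
    ∑ Y, sirsTrans G β δ γ X Y * sirsIndicator Y k ≤ (sirsM G β δ γ *ᵥ sirsIndicator X) k := by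
  rcases k with i | i
  · rw [(sum_sirsTrans_mul_sirsIndicator G X i).1, sirsM_mulVec_inl]
    obtain h | h | h : X i = 0 ∨ X i = 1 ∨ X i = 2 := by omega
    all_goals simp [sirsLocal, sirsIndicator, h]
  · rw [(sum_sirsTrans_mul_sirsIndicator G X i).2, sirsM_mulVec_inr,
      sum_neighborFinset_sirsIndicator]
    have hm := one_sub_one_sub_pow_le (by linarith [hβ.2]) (numInf3 G X i)
    have : 0 ≤ (numInf3 G X i : ℝ) * β := mul_nonneg (Nat.cast_nonneg _) hβ.1
    obtain h | h | h : X i = 0 ∨ X i = 1 ∨ X i = 2 := by omega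
    all_goals simp [sirsLocal, sirsIndicator, h]; linarith

variable {ν : (Fin n → Fin 3) → ℝ}

theorem sirsMarginal_vecMul_sirsTrans_le (hβ : β ∈ Set.Icc 0 1) (hν : ∀ X, 0 ≤ ν X)
    (k : Fin n ⊕ Fin n) :
    sirsMarginal (ν ᵥ* sirsTrans G β δ γ) k ≤ (sirsM G β δ γ *ᵥ sirsMarginal ν) k := by
  calc sirsMarginal (ν ᵥ* sirsTrans G β δ γ) k
      = ∑ X, ν X * ∑ Y, sirsTrans G β δ γ X Y * sirsIndicator Y k := by
        rw [sirsMarginal, vecMul_vecMul]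
        simp only [vecMul, dotProduct, mul_apply, of_apply]
    _ ≤ ∑ X, ν X * (sirsM G β δ γ *ᵥ sirsIndicator X) k :=
        Finset.sum_le_sum fun X _ =>
          mul_le_mul_of_nonneg_left (sum_sirsTrans_mul_sirsIndicator_le G hβ X k) (hν X)
    _ = (sirsM G β δ γ *ᵥ sirsMarginal ν) k := by
        rw [sirsMarginal, ← vecMul_transpose, vecMul_vecMul]
        simp only [vecMul, dotProduct, mul_apply, of_apply, transpose_apply, mulVec, mul_comm]

theorem sirsMarginal_vecMul_sirsTrans_pow_le (hβ : β ∈ Set.Icc 0 1) (hδ : δ ∈ Set.Icc 0 1)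
    (hγ : γ ∈ Set.Icc 0 1) (hν : ∀ X, 0 ≤ ν X) (t : ℕ) (k : Fin n ⊕ Fin n) :
    sirsMarginal (ν ᵥ* sirsTrans G β δ γ ^ t) k ≤ (sirsM G β δ γ ^ t *ᵥ sirsMarginal ν) k := by
  induction t generalizing k with
  | zero => simp
  | succ t ih =>
    have hS := pow_mem (sirsTrans_mem_rowStochastic G hβ hδ hγ) t
    calc sirsMarginal (ν ᵥ* sirsTrans G β δ γ ^ (t + 1)) k
        = sirsMarginal ((ν ᵥ* sirsTrans G β δ γ ^ t) ᵥ* sirsTrans G β δ γ) k := by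
          rw [pow_succ, vecMul_vecMul]
      _ ≤ (sirsM G β δ γ *ᵥ sirsMarginal (ν ᵥ* sirsTrans G β δ γ ^ t)) k :=
          sirsMarginal_vecMul_sirsTrans_le G hβ (nonneg_vecMul_of_mem_rowStochastic hS hν) k
      _ ≤ (sirsM G β δ γ *ᵥ (sirsM G β δ γ ^ t *ᵥ sirsMarginal ν)) k :=
          mulVec_le_mulVec_of_nonneg (sirsM_nonneg G hβ.1 hδ hγ.2) ih k
      _ = (sirsM G β δ γ ^ (t + 1) *ᵥ sirsMarginal ν) k := by
          rw [mulVec_mulVec, pow_succ']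

end Drift

section Mixing

variable {n : ℕ} (G : SimpleGraph (Fin n)) [DecidableRel G.Adj] {β δ γ : ℝ}
  {μ : (Fin n → Fin 3) → ℝ}

theorem tvDist_sirsTrans_pow_le (hβ : β ∈ Set.Icc 0 1) (hδ : δ ∈ Set.Icc 0 1)
    (hγ : γ ∈ Set.Icc 0 1) (hμ : ∀ X, 0 ≤ μ X) (hμ1 : ∑ X, μ X = 1) (t : ℕ) :
    tvDist (μ ᵥ* sirsTrans G β δ γ ^ t) (sirsPi n) ≤
      ∑ k, (sirsM G β δ γ ^ t *ᵥ sirsMarginal μ) k := by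
  have hS := pow_mem (sirsTrans_mem_rowStochastic G hβ hδ hγ) t
  have hμt1 : ∑ Y, (μ ᵥ* sirsTrans G β δ γ ^ t) Y = 1 := by
    simpa only [dotProduct_one] using
      vecMul_dotProduct_one_eq_one_rowStochastic hS (by rwa [dotProduct_one])
  exact (tvDist_sirsPi_le (nonneg_vecMul_of_mem_rowStochastic hS hμ) hμt1).trans
    (Finset.sum_le_sum fun k _ => sirsMarginal_vecMul_sirsTrans_pow_le G hβ hδ hγ hμ t k)

theorem tvDist_sirsTrans_pow_le_sqrt_two_mul (hβ : β ∈ Set.Icc 0 1) (hδ : δ ∈ Set.Icc 0 1)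
    (hγ : γ ∈ Set.Icc 0 1) (hμ : ∀ X, 0 ≤ μ X) (hμ1 : ∑ X, μ X = 1) (t : ℕ) :
    tvDist (μ ᵥ* sirsTrans G β δ γ ^ t) (sirsPi n) ≤ √2 * n * ‖sirsM G β δ γ‖ ^ t := by
  have hsum : ∑ k, (sirsM G β δ γ ^ t *ᵥ sirsMarginal μ) k =
      1 ⬝ᵥ sirsM G β δ γ ^ t *ᵥ sirsMarginal μ := by
    simp [dotProduct]
  have hcard : √(Fintype.card (Fin n ⊕ Fin n)) = √2 * √n := by
    rw [← Real.sqrt_mul zero_le_two, Fintype.card_sum, Fintype.card_fin, Nat.cast_add, two_mul]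
  calc tvDist (μ ᵥ* sirsTrans G β δ γ ^ t) (sirsPi n)
      ≤ 1 ⬝ᵥ sirsM G β δ γ ^ t *ᵥ sirsMarginal μ :=
        hsum ▸ tvDist_sirsTrans_pow_le G hβ hδ hγ hμ hμ1 t
    _ ≤ √2 * √n * ‖sirsM G β δ γ ^ t‖ * √n := by
        grw [dotProduct_mulVec_le_l2_opNorm, norm_toLp_one, hcard,
          norm_toLp_sirsMarginal_le hμ hμ1]
    _ ≤ √2 * √n * ‖sirsM G β δ γ‖ ^ t * √n := by
        grw [l2_opNorm_pow_le]
    _ = √2 * n * ‖sirsM G β δ γ‖ ^ t := by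
        rw [mul_right_comm _ _ √_, mul_assoc √2, Real.mul_self_sqrt (Nat.cast_nonneg n)]

theorem one_le_sqrt_two_mul_norm_sirsM (i : Fin n) : 1 ≤ √2 * ‖sirsM G β δ γ‖ := by
  have h := (sirsM G β δ γ).dotProduct_mulVec_le_l2_opNorm
    (Pi.single (Sum.inl i) 1 + Pi.single (Sum.inr i) 1) (Pi.single (Sum.inr i) 1)
  have hx : ‖WithLp.toLp 2
      (Pi.single (Sum.inl i) 1 + Pi.single (Sum.inr i) 1 : Fin n ⊕ Fin n → ℝ)‖ = √2 := by
    simp [EuclideanSpace.norm_eq, Fintype.sum_sum_type]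
    norm_num
  have hy : ‖WithLp.toLp 2 (Pi.single (Sum.inr i) 1 : Fin n ⊕ Fin n → ℝ)‖ = 1 := by
    rw [PiLp.toLp_single]
    simp
  rw [hx, hy, mul_one, add_dotProduct, mulVec_single_one] at h
  -- column `Sum.inr i` of `sirsM` carries `δ` and `1 - δ` in rows `Sum.inl i` and `Sum.inr i`
  simpa [sirsM] using h

/-- Taking `⌊L⌋₊` steps instead of `⌈L⌉₊` costs a factor `‖M‖⁻¹`, which the `√2` gained over the
`2n ‖M‖ᵗ` bound absorbs because `‖M‖ ≥ 1 / √2`. -/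
theorem sirsMix_le (hβ : β ∈ Set.Icc 0 1) (hδ : δ ∈ Set.Icc 0 1) (hγ : γ ∈ Set.Icc 0 1)
    (hn : 0 < n) (hM : ‖sirsM G β δ γ‖ < 1) {ε : ℝ} (hε0 : 0 < ε) (hεn : ε ≤ 2 * n) :
    (sirsMix G β δ γ ε : ℝ) ≤ Real.log (2 * n / ε) / -Real.log ‖sirsM G β δ γ‖ := by
  set r := ‖sirsM G β δ γ‖
  set L := Real.log (2 * n / ε) / -Real.log r
  have hr2 : 1 ≤ √2 * r := one_le_sqrt_two_mul_norm_sirsM G ⟨0, hn⟩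
  have hr0 : 0 < r := pos_of_mul_pos_right (one_pos.trans_le hr2) (Real.sqrt_nonneg 2)
  have ha : 0 < 2 * n / ε := by positivity
  have hmem : ⌊L⌋₊ ∈ {t : ℕ | ∀ μ : (Fin n → Fin 3) → ℝ, (∀ X, 0 ≤ μ X) → ∑ X, μ X = 1 →
      tvDist (μ ᵥ* (sirsTrans G β δ γ ^ t)) (sirsPi n) ≤ ε} := fun μ hμ hμ1 =>
    calc tvDist (μ ᵥ* (sirsTrans G β δ γ ^ ⌊L⌋₊)) (sirsPi n)
        ≤ √2 * n * r ^ ⌊L⌋₊ := tvDist_sirsTrans_pow_le_sqrt_two_mul G hβ hδ hγ hμ hμ1 _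
      _ ≤ √2 * n * (2 * n / ε * r)⁻¹ := by grw [pow_floor_log_div_neg_log_le hr0 hM ha]
      _ = ε / (√2 * r) := by
        field_simp
        rw [Real.sq_sqrt zero_le_two]
      _ ≤ ε := div_le_self hε0.le hr2
  have hL : 0 ≤ L := div_nonneg (Real.log_nonneg ((one_le_div hε0).2 hεn))
    (neg_nonneg.2 (Real.log_nonpos hr0.le hM.le))
  calc (sirsMix G β δ γ ε : ℝ) ≤ ⌊L⌋₊ := Nat.cast_le.2 (Nat.sInf_le hmem)
    _ ≤ L := Nat.floor_le hL

end Mixing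

theorem stmt14_general {n : ℕ} (hn : 1 ≤ n) (G : SimpleGraph (Fin n)) [DecidableRel G.Adj]
    (β δ γ : ℝ) (hβ : β ∈ Set.Ioo (0 : ℝ) 1)
    (hδ : δ ∈ Set.Ioo (0 : ℝ) 1) (hγ : γ ∈ Set.Ioo (0 : ℝ) 1) :
    (sirsPi n ᵥ* sirsTrans G β δ γ = sirsPi n) ∧
    (∀ t : ℕ, ∀ μ : (Fin n → Fin 3) → ℝ, (∀ X, 0 ≤ μ X) → ∑ X, μ X = 1 →
      tvDist (μ ᵥ* (sirsTrans G β δ γ ^ t)) (sirsPi n) ≤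
        ∑ i, ∑ j, (sirsM G β δ γ ^ t) i j) ∧
    (∀ t : ℕ, ∑ i, ∑ j, (sirsM G β δ γ ^ t) i j ≤
      (2 * n : ℝ) * specNorm (sirsM G β δ γ) ^ t) ∧
    (specNorm (sirsM G β δ γ) < 1 → ∀ ε ∈ Set.Ioo (0 : ℝ) 1,
      (sirsMix G β δ γ ε : ℝ) ≤
        Real.log (2 * n / ε) / (- Real.log (specNorm (sirsM G β δ γ)))) := by
  replace hβ := Set.Ioo_subset_Icc_self hβ
  replace hδ := Set.Ioo_subset_Icc_self hδ
  replace hγ := Set.Ioo_subset_Icc_self hγ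
  have hM := Matrix.pow_apply_nonneg (sirsM_nonneg G hβ.1 hδ hγ.2)
  simp only [specNorm_eq_l2_opNorm]
  refine ⟨sirsPi_vecMul_sirsTrans G, fun t μ hμ hμ1 => ?_, fun t => ?_, fun hr ε hε => ?_⟩
  · calc tvDist (μ ᵥ* (sirsTrans G β δ γ ^ t)) (sirsPi n)
        ≤ ∑ k, (sirsM G β δ γ ^ t *ᵥ sirsMarginal μ) k :=
          tvDist_sirsTrans_pow_le G hβ hδ hγ hμ hμ1 t
      _ ≤ ∑ k, (sirsM G β δ γ ^ t *ᵥ 1) k := Finset.sum_le_sum fun k _ =>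
          mulVec_le_mulVec_of_nonneg (hM t) (sirsMarginal_le_one hμ hμ1) k
      _ = ∑ i, ∑ j, (sirsM G β δ γ ^ t) i j := by simp [mulVec, dotProduct]
  · calc ∑ i, ∑ j, (sirsM G β δ γ ^ t) i j
        ≤ Fintype.card (Fin n ⊕ Fin n) * ‖sirsM G β δ γ ^ t‖ := sum_sum_le_card_mul_l2_opNorm _
      _ ≤ 2 * n * ‖sirsM G β δ γ‖ ^ t := by
          grw [l2_opNorm_pow_le]
          simp [two_mul]
  · have hεn : ε ≤ 2 * n := by linarith [hε.2, (Nat.one_le_cast (α := ℝ)).2 hn]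
    exact sirsMix_le G hβ hδ hγ hn hr hε.1 hεn

/-- `π` (the point mass on the all-susceptible state) is stationary for the
SIRS chain; for every `t` and every initial distribution `μ`,
`‖μSᵗ − π‖_TV ≤ 1ᵀ Mᵗ 1 ≤ 2n ‖M‖ᵗ`; consequently, if `‖M‖ < 1`, then for every `ε ∈ (0,1)`,
`t_mix(ε) ≤ log(2n/ε)/(−log ‖M‖)`, i.e. the mixing time is `O(log n)`. -/
theorem stmt14 {n : ℕ} (hn : 1 ≤ n) (G : SimpleGraph (Fin n)) [DecidableRel G.Adj]
    (hG : G.Connected) (β δ γ : ℝ) (hβ : β ∈ Set.Ioo (0 : ℝ) 1)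
    (hδ : δ ∈ Set.Ioo (0 : ℝ) 1) (hγ : γ ∈ Set.Ioo (0 : ℝ) 1) :
    (sirsPi n ᵥ* sirsTrans G β δ γ = sirsPi n) ∧
    (∀ t : ℕ, ∀ μ : (Fin n → Fin 3) → ℝ, (∀ X, 0 ≤ μ X) → ∑ X, μ X = 1 →
      tvDist (μ ᵥ* (sirsTrans G β δ γ ^ t)) (sirsPi n) ≤
        ∑ i, ∑ j, (sirsM G β δ γ ^ t) i j) ∧
    (∀ t : ℕ, ∑ i, ∑ j, (sirsM G β δ γ ^ t) i j ≤
      (2 * n : ℝ) * specNorm (sirsM G β δ γ) ^ t) ∧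
    (specNorm (sirsM G β δ γ) < 1 → ∀ ε ∈ Set.Ioo (0 : ℝ) 1,
      (sirsMix G β δ γ ε : ℝ) ≤
        Real.log (2 * n / ε) / (- Real.log (specNorm (sirsM G β δ γ)))) :=
  stmt14_general hn G β δ γ hβ hδ hγ
end

section
/- Consider the vaccination-dominant SIV nonlinear map F_VD on D. The point (P_R, P_I) = ((θ/(γ+θ))1_n, 0_n) is a fixed point of F_VD (the disease-free fixed point), and: (a) if (1−θ)·(γ/(γ+θ))·(β/δ)·λmax(A) < 1, then it is locally stable, i.e. there is a relatively open neighborhood U of it in D such that F_VD^t(x) converges to it as t → ∞ for every x ∈ U; (b) if (1−θ)·(β/δ)·λmax(A) < 1, then it is globally stable, i.e. F_VD^t(x) converges to it for every x ∈ D. -/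
open Matrix Finset

/-- The domain `D = {(P_R, P_I) ∈ [0,1]^n × [0,1]^n : P_R + P_I ⪯ 1}`. -/
def sivD (n : ℕ) : Set ((Fin n → ℝ) × (Fin n → ℝ)) :=
  {p | p.1 ∈ Set.Icc (0 : Fin n → ℝ) 1 ∧ p.2 ∈ Set.Icc (0 : Fin n → ℝ) 1 ∧
    ∀ i, p.1 i + p.2 i ≤ 1}

/-- The vaccination-dominant SIV nonlinear (mean-field) map `F_VD(P_R, P_I)`:
`P_R,i′ = (1−γ)P_R,i + δ P_I,i + θ(1 − P_R,i − P_I,i)` and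
`P_I,i′ = (1−δ)P_I,i + (1−θ)(1 − ∏_{j∈N_i}(1−β P_I,j))(1 − P_R,i − P_I,i)`. -/
noncomputable def sivFVD {n : ℕ} (G : SimpleGraph (Fin n)) [DecidableRel G.Adj]
    (β δ γ θ : ℝ) (p : (Fin n → ℝ) × (Fin n → ℝ)) : (Fin n → ℝ) × (Fin n → ℝ) :=
  (fun i => (1 - γ) * p.1 i + δ * p.2 i + θ * (1 - p.1 i - p.2 i),
   fun i => (1 - δ) * p.2 i +
      (1 - θ) * (1 - ∏ j ∈ G.neighborFinset i, (1 - β * p.2 j)) * (1 - p.1 i - p.2 i))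

/-- The disease-free point `((θ/(γ+θ))1_n, 0_n)`. -/
noncomputable def sivDFP (n : ℕ) (γ θ : ℝ) : (Fin n → ℝ) × (Fin n → ℝ) :=
  (fun _ => θ / (γ + θ), fun _ => 0)

/-!
Fix `l > λmax(A)` for which the threshold condition is still strict. The matrix `l - A` is
positive definite with nonpositive off-diagonal entries, so `u = (l - A)⁻¹ 1` is nonnegative and
`v = l u ≥ 1` satisfies `A v ≤ l v`. Since `1 - ∏ (1 - β x_j) ≤ β ∑ x_j`, a bound `P_I ≤ a v`
becomes `P_I' ≤ ((1 - δ) + (1 - θ) β l c) a v` as long as the susceptible fractions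
`1 - P_R - P_I` are at most `c`. Globally `c = 1` works; near the fixed point any
`c > γ / (γ + θ)` does, so in both cases `P_I` decays geometrically. Finally
`P_R' - θ / (γ + θ) = (1 - γ - θ) (P_R - θ / (γ + θ)) + (δ - θ) P_I` is a contraction driven by a
vanishing input, so `P_R → θ / (γ + θ)`.
-/

open Filter Topology

theorem Matrix.IsHermitian.posDef_algebraMap_sub_of_lamMax_lt {n : ℕ}
    {A : Matrix (Fin n) (Fin n) ℝ} (hA : A.IsHermitian) {l : ℝ} (hl : lamMax A < l) :
    (algebraMap ℝ _ l - A).PosDef := by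
  have hσ : ∀ x ∈ spectrum ℝ (algebraMap ℝ _ l - A), 0 < x := by
    rintro _ hx
    rw [← spectrum.singleton_sub_eq] at hx
    obtain ⟨_, rfl, μ, hμ, rfl⟩ := hx
    have : μ ≤ lamMax A := le_csSup A.finite_spectrum.bddAbove hμ
    simp only [sub_pos]
    linarith
  have hpsd : (algebraMap ℝ _ l - A).PosSemidef :=
    posSemidef_iff_isHermitian_and_spectrum_nonneg.mpr
      ⟨(IsSelfAdjoint.algebraMap _ (IsSelfAdjoint.all l)).sub hA, fun x hx => (hσ x hx).le⟩
  exact hpsd.posDef_iff_isUnit.mpr <| (spectrum.zero_notMem_iff ℝ).mp fun h => (hσ 0 h).false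

theorem Matrix.PosDef.nonneg_of_mulVec_nonneg {ι : Type*} [Fintype ι] {B : Matrix ι ι ℝ}
    (hB : B.PosDef) (hoff : ∀ i j, i ≠ j → B i j ≤ 0) {v : ι → ℝ} (hv : 0 ≤ B *ᵥ v) :
    0 ≤ v := by
  set w : ι → ℝ := fun i => max (-v i) 0 with hw
  have hw0 : 0 ≤ w := fun i => le_max_right _ _
  -- `w + v` is the positive part of `v`, whose support meets that of `w` only off the diagonal
  have hcross : w ⬝ᵥ (B *ᵥ w) + w ⬝ᵥ (B *ᵥ v) ≤ 0 := by
    rw [← dotProduct_add, ← mulVec_add]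
    simp only [dotProduct, mulVec, Finset.mul_sum]
    refine Finset.sum_nonpos fun i _ => Finset.sum_nonpos fun j _ => ?_
    have hpos : 0 ≤ (w + v) j := by simp only [hw, Pi.add_apply]; grind
    rcases eq_or_ne i j with rfl | hij
    · have : w i * (w + v) i = 0 := by simp only [hw, Pi.add_apply]; grind
      rw [mul_left_comm, this, mul_zero]
    · nlinarith [mul_nonpos_of_nonneg_of_nonpos (hw0 i) (hoff i j hij), mul_nonneg (hw0 i) hpos]
  have hwz : w = 0 := by
    by_contra hne
    have := hB.dotProduct_mulVec_pos hne
    have := dotProduct_nonneg_of_nonneg hw0 hv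
    simp only [star_trivial] at *
    linarith
  intro i
  simpa [hw] using congrFun hwz i

theorem Matrix.IsHermitian.exists_one_le_mulVec_le_of_lamMax_lt {n : ℕ}
    {A : Matrix (Fin n) (Fin n) ℝ} (hA : A.IsHermitian) (hA0 : ∀ i j, 0 ≤ A i j) {l : ℝ}
    (hl : lamMax A < l) (hl0 : 0 ≤ l) : ∃ v : Fin n → ℝ, 1 ≤ v ∧ A *ᵥ v ≤ l • v := by
  have hB := hA.posDef_algebraMap_sub_of_lamMax_lt hl
  -- `u = (l - A)⁻¹ 1` is nonnegative, and `v = l u = 1 + A u`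
  obtain ⟨u, hu⟩ := mulVec_surjective_iff_isUnit.mpr hB.isUnit (1 : Fin n → ℝ)
  have hoff : ∀ i j, i ≠ j → (algebraMap ℝ _ l - A) i j ≤ 0 := fun i j hij => by
    simp [algebraMap_matrix_apply, hij, hA0 i j]
  have hu0 : 0 ≤ u := hB.nonneg_of_mulVec_nonneg hoff (hu ▸ zero_le_one)
  have hAu : 0 ≤ A *ᵥ u := fun i => dotProduct_nonneg_of_nonneg (hA0 i) hu0
  have hv : l • u = 1 + A *ᵥ u := by
    rw [← hu, sub_mulVec, Algebra.algebraMap_eq_smul_one, smul_mulVec, one_mulVec,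
      sub_add_cancel]
  refine ⟨l • u, by rw [hv]; exact le_add_of_nonneg_right hAu, ?_⟩
  rw [mulVec_smul, hv, smul_add]
  exact le_add_of_nonneg_left (smul_nonneg hl0 zero_le_one)

theorem SimpleGraph.exists_one_le_sum_neighborFinset_le {n : ℕ} (G : SimpleGraph (Fin n))
    [DecidableRel G.Adj] {l : ℝ} (hl : lamMax (G.adjMatrix ℝ) < l) (hl0 : 0 ≤ l) :
    ∃ v : Fin n → ℝ, (∀ i, 1 ≤ v i) ∧ ∀ i, ∑ j ∈ G.neighborFinset i, v j ≤ l * v i := by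
  obtain ⟨v, hv1, hAv⟩ := (G.isHermitian_adjMatrix ℝ).exists_one_le_mulVec_le_of_lamMax_lt
    (fun i j => by by_cases h : G.Adj i j <;> simp [h]) hl hl0
  exact ⟨v, hv1, fun i => by simpa [adjMatrix_mulVec_apply] using hAv i⟩

theorem Finset.prod_one_sub_mem_Icc {ι : Type*} (s : Finset ι) {f : ι → ℝ}
    (hf : ∀ j ∈ s, f j ∈ Set.Icc 0 1) : ∏ j ∈ s, (1 - f j) ∈ Set.Icc 0 1 :=
  ⟨prod_nonneg fun j hj => sub_nonneg.2 (hf j hj).2,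
    prod_le_one (fun j hj => sub_nonneg.2 (hf j hj).2) fun j hj => sub_le_self _ (hf j hj).1⟩

theorem Finset.one_sub_prod_one_sub_le_sum {ι : Type*} (s : Finset ι) {f : ι → ℝ}
    (hf : ∀ j ∈ s, f j ∈ Set.Icc 0 1) : 1 - ∏ j ∈ s, (1 - f j) ≤ ∑ j ∈ s, f j := by
  induction s using Finset.cons_induction with
  | empty => simp
  | cons a s ha ih =>
    rw [prod_cons, sum_cons]
    have hs := s.prod_one_sub_mem_Icc fun j hj => hf j (mem_cons_of_mem hj)
    have := ih fun j hj => hf j (mem_cons_of_mem hj)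
    nlinarith [(hf a (mem_cons_self a s)).1, hs.2]

theorem exists_lt_mul_lt {k m b : ℝ} (h : k * m < b) : ∃ x, m < x ∧ k * x < b := by
  obtain ⟨ε, hε, hkε⟩ := exists_pos_mul_lt (sub_pos.2 h) k
  exact ⟨m + ε, by linarith, by linarith [mul_add k m ε]⟩

theorem mul_mul_max_zero_lt {k b δ L : ℝ} (hδ : 0 < δ) (h : k * (b / δ) * L < 1) :
    k * b * max L 0 < δ := by
  rcases le_total L 0 with hL | hL
  · simpa [max_eq_right hL] using hδ
  · rw [max_eq_left hL]
    calc k * b * L = k * (b / δ) * L * δ := by field_simp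
      _ < 1 * δ := by gcongr
      _ = δ := one_mul δ

theorem tendsto_zero_of_le_mul_add {y e : ℕ → ℝ} {k : ℝ} (hy : ∀ t, 0 ≤ y t) (hk0 : 0 ≤ k)
    (hk1 : k < 1) (hstep : ∀ t, y (t + 1) ≤ k * y t + e t) (he : Tendsto e atTop (𝓝 0)) :
    Tendsto y atTop (𝓝 0) := by
  rw [Metric.tendsto_atTop]
  intro ε hε
  have hε' : 0 < (1 - k) * (ε / 2) := by nlinarith
  obtain ⟨N, hN⟩ := (he.eventually (gt_mem_nhds hε')).exists_forall_of_atTop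
  -- beyond `N`, the excess of `y` over `ε / 2` contracts by the factor `k`
  have hz : ∀ m, y (N + m) - ε / 2 ≤ k ^ m * (y N - ε / 2) := by
    intro m
    induction m with
    | zero => simp
    | succ m ih =>
      calc y (N + m + 1) - ε / 2 ≤ k * (y (N + m) - ε / 2) := by
            nlinarith [hstep (N + m), hN (N + m) (by omega)]
        _ ≤ k * (k ^ m * (y N - ε / 2)) := mul_le_mul_of_nonneg_left ih hk0
        _ = k ^ (m + 1) * (y N - ε / 2) := by ring
  have hpow := (tendsto_pow_atTop_nhds_zero_of_lt_one hk0 hk1).mul_const (y N - ε / 2)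
  rw [zero_mul] at hpow
  obtain ⟨M, hM⟩ := (hpow.eventually (gt_mem_nhds (half_pos hε))).exists_forall_of_atTop
  refine ⟨N + M, fun t ht => ?_⟩
  obtain ⟨m, rfl⟩ := Nat.exists_eq_add_of_le ht
  rw [Real.dist_0_eq_abs, abs_of_nonneg (hy _), add_assoc]
  linarith [hz (M + m), hM (M + m) (by omega)]

theorem tendsto_zero_of_nonneg_of_le_pow_mul {ι : Type*} {x : ℕ → ι → ℝ} {μ : ℝ} {w : ι → ℝ}
    (hμ0 : 0 ≤ μ) (hμ1 : μ < 1) (hx0 : ∀ t i, 0 ≤ x t i) (hx : ∀ t i, x t i ≤ μ ^ t * w i) :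
    Tendsto x atTop (𝓝 0) :=
  tendsto_pi_nhds.2 fun i => squeeze_zero (fun t => hx0 t i) (fun t => hx t i) <| by
    simpa using (tendsto_pow_atTop_nhds_zero_of_lt_one hμ0 hμ1).mul_const (w i)

theorem mem_sivD_iff {n : ℕ} {p : (Fin n → ℝ) × (Fin n → ℝ)} :
    p ∈ sivD n ↔ ∀ i, 0 ≤ p.1 i ∧ 0 ≤ p.2 i ∧ p.1 i + p.2 i ≤ 1 := by
  simp only [sivD, Set.mem_ofPred_eq, Set.mem_Icc, Pi.le_def, Pi.zero_apply, Pi.one_apply]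
  constructor
  · rintro ⟨⟨hR, -⟩, ⟨hI, -⟩, hRI⟩ i
    exact ⟨hR i, hI i, hRI i⟩
  · intro h
    refine ⟨⟨fun i => (h i).1, fun i => ?_⟩, ⟨fun i => (h i).2.1, fun i => ?_⟩,
      fun i => (h i).2.2⟩ <;> linarith [h i]

section SIV

variable {n : ℕ} (G : SimpleGraph (Fin n)) [DecidableRel G.Adj] {β δ γ θ : ℝ}

theorem mul_snd_mem_Icc_of_mem_sivD (hβ : β ∈ Set.Icc 0 1) {p : (Fin n → ℝ) × (Fin n → ℝ)}
    (hp : p ∈ sivD n) (j : Fin n) : β * p.2 j ∈ Set.Icc 0 1 := by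
  obtain ⟨hR, hI, hRI⟩ := mem_sivD_iff.1 hp j
  exact ⟨mul_nonneg hβ.1 hI, mul_le_one₀ hβ.2 hI (by linarith)⟩

theorem sivFVD_mapsTo (hβ : β ∈ Set.Icc 0 1) (hδ : δ ∈ Set.Icc 0 1) (hγ : γ ∈ Set.Icc 0 1)
    (hθ : θ ∈ Set.Icc 0 1) : Set.MapsTo (sivFVD G β δ γ θ) (sivD n) (sivD n) := by
  intro p hp
  rw [mem_sivD_iff]
  intro i
  obtain ⟨hR, hI, hRI⟩ := mem_sivD_iff.1 hp i
  obtain ⟨hP0, hP1⟩ := (G.neighborFinset i).prod_one_sub_mem_Icc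
    fun j _ => mul_snd_mem_Icc_of_mem_sivD hβ hp j
  have hS : 0 ≤ 1 - p.1 i - p.2 i := by linarith
  simp only [sivFVD]
  refine ⟨?_, ?_, ?_⟩
  · nlinarith [mul_nonneg (sub_nonneg.2 hγ.2) hR, mul_nonneg hδ.1 hI, mul_nonneg hθ.1 hS]
  · nlinarith [mul_nonneg (sub_nonneg.2 hδ.2) hI,
      mul_nonneg (mul_nonneg (sub_nonneg.2 hθ.2) (sub_nonneg.2 hP1)) hS]
  · nlinarith [mul_nonneg hγ.1 hR, mul_nonneg (mul_nonneg (sub_nonneg.2 hθ.2) hP0) hS]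

theorem sivFVD_fst_sub_eq (hγθ : γ + θ ≠ 0) (p : (Fin n → ℝ) × (Fin n → ℝ)) (i : Fin n) :
    (sivFVD G β δ γ θ p).1 i - θ / (γ + θ) =
      (1 - γ - θ) * (p.1 i - θ / (γ + θ)) + (δ - θ) * p.2 i := by
  simp only [sivFVD]
  field_simp
  ring

theorem sivFVD_snd_le (hβ : β ∈ Set.Icc 0 1) (hδ : δ ≤ 1) (hθ : θ ≤ 1)
    {p : (Fin n → ℝ) × (Fin n → ℝ)} (hp : p ∈ sivD n) {c a l : ℝ} {v : Fin n → ℝ}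
    (hS : ∀ i, 1 - p.1 i - p.2 i ≤ c) (ha : 0 ≤ a) (hI : ∀ i, p.2 i ≤ a * v i)
    (hv : ∀ i, ∑ j ∈ G.neighborFinset i, v j ≤ l * v i) (i : Fin n) :
    (sivFVD G β δ γ θ p).2 i ≤ ((1 - δ) + (1 - θ) * β * l * c) * (a * v i) := by
  obtain ⟨hR, hI0, hRI⟩ := mem_sivD_iff.1 hp i
  have hf := fun j (_ : j ∈ G.neighborFinset i) => mul_snd_mem_Icc_of_mem_sivD hβ hp j
  have hq0 := sub_nonneg.2 ((G.neighborFinset i).prod_one_sub_mem_Icc hf).2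
  have hq : 1 - ∏ j ∈ G.neighborFinset i, (1 - β * p.2 j) ≤ β * (a * (l * v i)) :=
    calc _ ≤ ∑ j ∈ G.neighborFinset i, β * p.2 j :=
          (G.neighborFinset i).one_sub_prod_one_sub_le_sum hf
      _ ≤ β * (a * ∑ j ∈ G.neighborFinset i, v j) := by
          rw [← mul_sum, mul_sum _ _ a]
          exact mul_le_mul_of_nonneg_left (sum_le_sum fun j _ => hI j) hβ.1
      _ ≤ β * (a * (l * v i)) := by gcongr; exacts [hβ.1, hv i]
  have hqS := mul_le_mul hq (hS i) (by linarith) (hq0.trans hq)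
  simp only [sivFVD]
  nlinarith [mul_le_mul_of_nonneg_left (hI i) (sub_nonneg.2 hδ),
    mul_le_mul_of_nonneg_left hqS (sub_nonneg.2 hθ)]

theorem isFixedPt_sivDFP (hγθ : γ + θ ≠ 0) :
    Function.IsFixedPt (sivFVD G β δ γ θ) (sivDFP n γ θ) := by
  ext i <;> simp only [sivFVD, sivDFP]
  · field_simp
    ring
  · simp

theorem tendsto_iterate_sivFVD_of_tendsto_snd (h₀ : 0 < γ + θ) (h₂ : γ + θ < 2)
    {p : (Fin n → ℝ) × (Fin n → ℝ)}
    (hI : Tendsto (fun t => ((sivFVD G β δ γ θ)^[t] p).2) atTop (𝓝 0)) :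
    Tendsto (fun t => (sivFVD G β δ γ θ)^[t] p) atTop (𝓝 (sivDFP n γ θ)) := by
  have hR : ∀ i, Tendsto (fun t => ((sivFVD G β δ γ θ)^[t] p).1 i - θ / (γ + θ)) atTop (𝓝 0) := by
    intro i
    rw [tendsto_zero_iff_abs_tendsto_zero]
    refine tendsto_zero_of_le_mul_add (fun t => abs_nonneg _) (abs_nonneg (1 - γ - θ))
      (by rw [abs_lt]; constructor <;> linarith)
      (e := fun t => |δ - θ| * |((sivFVD G β δ γ θ)^[t] p).2 i|) (fun t => ?_) ?_
    · dsimp only [Function.comp_apply]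
      rw [Function.iterate_succ_apply', sivFVD_fst_sub_eq G h₀.ne', ← abs_mul, ← abs_mul]
      exact abs_add_le _ _
    · simpa using (((continuous_apply i).tendsto 0).comp hI).abs.const_mul |δ - θ|
  have := (tendsto_pi_nhds.2 fun i => (hR i).add_const (θ / (γ + θ))).prodMk_nhds hI
  rw [show sivDFP n γ θ = (fun _ => θ / (γ + θ), 0) from rfl]
  simpa using this


-- Keeping `P_R` near `θ / (γ + θ)` keeps the susceptible fractions below `c`.
theorem iterate_sivFVD_local_bound (hβ : β ∈ Set.Icc 0 1) (hδ : δ ∈ Set.Icc 0 1)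
    (hγ : γ ∈ Set.Icc 0 1) (hθ : θ ∈ Set.Icc 0 1) (hγθ : 0 < γ + θ) {c a l μ : ℝ}
    {v : Fin n → ℝ} (hv0 : ∀ i, 0 ≤ v i) (hv : ∀ i, ∑ j ∈ G.neighborFinset i, v j ≤ l * v i)
    (ha : 0 ≤ a) (hμ0 : 0 ≤ μ) (hμ1 : μ ≤ 1) (hμ : (1 - δ) + (1 - θ) * β * l * c ≤ μ)
    (hsmall : ∀ i, |δ - θ| * (a * v i) ≤ (1 - |1 - γ - θ|) * (c - γ / (γ + θ)))
    {p : (Fin n → ℝ) × (Fin n → ℝ)} (hp : p ∈ sivD n)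
    (h0 : ∀ i, |p.1 i - θ / (γ + θ)| ≤ c - γ / (γ + θ) ∧ p.2 i ≤ a * v i) (t : ℕ) (i : Fin n) :
    |((sivFVD G β δ γ θ)^[t] p).1 i - θ / (γ + θ)| ≤ c - γ / (γ + θ) ∧
      ((sivFVD G β δ γ θ)^[t] p).2 i ≤ μ ^ t * (a * v i) := by
  induction t generalizing i with
  | zero => simpa using h0 i
  | succ t ih =>
    set q := (sivFVD G β δ γ θ)^[t] p
    have hq : q ∈ sivD n := (sivFVD_mapsTo G hβ hδ hγ hθ).iterate t hp
    have hrs : θ / (γ + θ) + γ / (γ + θ) = 1 := by field_simp; ring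
    have hS : ∀ i, 1 - q.1 i - q.2 i ≤ c := fun i => by
      linarith [(abs_le.1 (ih i).1).1, (mem_sivD_iff.1 hq i).2.1]
    have haμ : 0 ≤ μ ^ t * a := mul_nonneg (pow_nonneg hμ0 t) ha
    have hI' := sivFVD_snd_le G (γ := γ) hβ hδ.2 hθ.2 hq hS haμ
      (fun i => (ih i).2.trans_eq (mul_assoc _ _ _).symm) hv i
    have hIq : |δ - θ| * |q.2 i| ≤ (1 - |1 - γ - θ|) * (c - γ / (γ + θ)) := by
      rw [abs_of_nonneg (mem_sivD_iff.1 hq i).2.1]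
      refine le_trans ?_ (hsmall i)
      gcongr
      exact (ih i).2.trans (mul_le_of_le_one_left (mul_nonneg ha (hv0 i)) (pow_le_one₀ hμ0 hμ1))
    rw [Function.iterate_succ_apply']
    constructor
    · rw [sivFVD_fst_sub_eq G hγθ.ne']
      calc _ ≤ |1 - γ - θ| * |q.1 i - θ / (γ + θ)| + |δ - θ| * |q.2 i| := by
            rw [← abs_mul, ← abs_mul]; exact abs_add_le _ _
        _ ≤ |1 - γ - θ| * (c - γ / (γ + θ)) + (1 - |1 - γ - θ|) * (c - γ / (γ + θ)) := by
            gcongr; exact (ih i).1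
        _ = c - γ / (γ + θ) := by ring
    · calc _ ≤ _ := hI'
        _ ≤ μ * (μ ^ t * a * v i) := by
            gcongr
            exact mul_nonneg haμ (hv0 i)
        _ = μ ^ (t + 1) * (a * v i) := by ring

theorem exists_isOpen_tendsto_iterate_sivFVD_sivDFP (hβ : β ∈ Set.Ioo 0 1)
    (hδ : δ ∈ Set.Ioo 0 1) (hγ : γ ∈ Set.Ioo 0 1) (hθ : θ ∈ Set.Ioo 0 1)
    (h : (1 - θ) * (γ / (γ + θ)) * (β / δ) * lamMax (G.adjMatrix ℝ) < 1) :
    ∃ V : Set ((Fin n → ℝ) × (Fin n → ℝ)), IsOpen V ∧ sivDFP n γ θ ∈ V ∧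
      ∀ p ∈ V ∩ sivD n, Tendsto (fun t => (sivFVD G β δ γ θ)^[t] p) atTop (𝓝 (sivDFP n γ θ)) := by
  set s := γ / (γ + θ)
  set L := max (lamMax (G.adjMatrix ℝ)) 0
  have hsL := mul_mul_max_zero_lt hδ.1 h
  obtain ⟨c, hsc, hc⟩ := exists_lt_mul_lt (k := (1 - θ) * β * L) (m := s) (b := δ) (by linarith)
  obtain ⟨l, hLl, hl⟩ := exists_lt_mul_lt (k := (1 - θ) * β * c) (m := L) (b := δ) (by linarith)
  obtain ⟨v, hv1, hv⟩ := G.exists_one_le_sum_neighborFinset_le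
    ((le_max_left _ _).trans_lt hLl) ((le_max_right _ _).trans hLl.le)
  obtain ⟨V, hV⟩ := Finite.exists_le v
  have hκ : |1 - γ - θ| < 1 := by rw [abs_lt]; constructor <;> linarith [hγ.1, hγ.2, hθ.1, hθ.2]
  obtain ⟨a, ha, haV⟩ := exists_pos_mul_lt (mul_pos (sub_pos.2 hκ) (sub_pos.2 hsc)) (|δ - θ| * V)
  have hsmall : ∀ i, |δ - θ| * (a * v i) ≤ (1 - |1 - γ - θ|) * (c - s) := fun i =>
    calc |δ - θ| * (a * v i) ≤ |δ - θ| * (a * V) := by gcongr; exact hV i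
      _ = |δ - θ| * V * a := by ring
      _ ≤ _ := haV.le
  have hμ0 : 0 ≤ (1 - δ) + (1 - θ) * β * l * c := by
    have := (le_max_right _ _).trans hLl.le
    have := (div_pos hγ.1 (add_pos hγ.1 hθ.1)).trans hsc
    have := sub_pos.2 hθ.2
    have := sub_pos.2 hδ.2
    have := hβ.1
    positivity
  refine ⟨{q | ∀ i, |q.1 i - θ / (γ + θ)| < c - s ∧ q.2 i < a}, ?_, fun i => ?_, ?_⟩
  · simp only [Set.ofPred_forall, Set.ofPred_and]
    exact isOpen_iInter_of_finite fun i =>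
      (isOpen_lt (by fun_prop) continuous_const).inter (isOpen_lt (by fun_prop) continuous_const)
  · simpa [sivDFP] using ⟨hsc, ha⟩
  rintro p ⟨hpV, hp⟩
  have hMaps := sivFVD_mapsTo G (Set.Ioo_subset_Icc_self hβ) (Set.Ioo_subset_Icc_self hδ)
    (Set.Ioo_subset_Icc_self hγ) (Set.Ioo_subset_Icc_self hθ)
  have hbound := iterate_sivFVD_local_bound G (Set.Ioo_subset_Icc_self hβ)
    (Set.Ioo_subset_Icc_self hδ) (Set.Ioo_subset_Icc_self hγ) (Set.Ioo_subset_Icc_self hθ)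
    (add_pos hγ.1 hθ.1) (fun i => zero_le_one.trans (hv1 i)) hv ha.le hμ0 (by linarith) le_rfl
    hsmall hp fun i => ⟨(hpV i).1.le, (hpV i).2.le.trans (le_mul_of_one_le_right ha.le (hv1 i))⟩
  exact tendsto_iterate_sivFVD_of_tendsto_snd G (by linarith [hγ.1, hθ.1])
    (by linarith [hγ.2, hθ.2]) (tendsto_zero_of_nonneg_of_le_pow_mul hμ0 (by linarith)
      (fun t i => (mem_sivD_iff.1 (hMaps.iterate t hp) i).2.1) fun t i => (hbound t i).2)

theorem tendsto_iterate_sivFVD_sivDFP (hβ : β ∈ Set.Ioo 0 1) (hδ : δ ∈ Set.Ioo 0 1)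
    (hγ : γ ∈ Set.Ioo 0 1) (hθ : θ ∈ Set.Ioo 0 1)
    (h : (1 - θ) * (β / δ) * lamMax (G.adjMatrix ℝ) < 1) {p : (Fin n → ℝ) × (Fin n → ℝ)}
    (hp : p ∈ sivD n) :
    Tendsto (fun t => (sivFVD G β δ γ θ)^[t] p) atTop (𝓝 (sivDFP n γ θ)) := by
  obtain ⟨l, hLl, hl⟩ := exists_lt_mul_lt (mul_mul_max_zero_lt hδ.1 h)
  obtain ⟨v, hv1, hv⟩ := G.exists_one_le_sum_neighborFinset_le
    ((le_max_left _ _).trans_lt hLl) ((le_max_right _ _).trans hLl.le)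
  have hMaps := sivFVD_mapsTo G (Set.Ioo_subset_Icc_self hβ) (Set.Ioo_subset_Icc_self hδ)
    (Set.Ioo_subset_Icc_self hγ) (Set.Ioo_subset_Icc_self hθ)
  have hD : ∀ t, (sivFVD G β δ γ θ)^[t] p ∈ sivD n := fun t => hMaps.iterate t hp
  have hμ0 : 0 ≤ 1 - δ + (1 - θ) * β * l := by
    have := (le_max_right _ _).trans hLl.le
    have := sub_pos.2 hθ.2
    have := sub_pos.2 hδ.2
    have := hβ.1
    positivity
  have hbound : ∀ t i, ((sivFVD G β δ γ θ)^[t] p).2 i ≤ (1 - δ + (1 - θ) * β * l) ^ t * v i := by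
    intro t
    induction t with
    | zero => exact fun i => by simpa using (by linarith [mem_sivD_iff.1 hp i, hv1 i] : p.2 i ≤ v i)
    | succ t ih =>
      intro i
      rw [Function.iterate_succ_apply']
      have hS : ∀ i, 1 - ((sivFVD G β δ γ θ)^[t] p).1 i - ((sivFVD G β δ γ θ)^[t] p).2 i ≤ 1 :=
        fun i => by linarith [mem_sivD_iff.1 (hD t) i]
      refine (sivFVD_snd_le G (Set.Ioo_subset_Icc_self hβ) hδ.2.le hθ.2.le (hD t) hS
        (pow_nonneg hμ0 t) ih hv i).trans_eq ?_
      ring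
  exact tendsto_iterate_sivFVD_of_tendsto_snd G (by linarith [hγ.1, hθ.1])
    (by linarith [hγ.2, hθ.2]) (tendsto_zero_of_nonneg_of_le_pow_mul hμ0 (by linarith)
      (fun t i => (mem_sivD_iff.1 (hD t) i).2.1) hbound)

end SIV

theorem stmt18_general {n : ℕ} (G : SimpleGraph (Fin n)) [DecidableRel G.Adj]
    (β δ γ θ : ℝ) (hβ : β ∈ Set.Ioo (0 : ℝ) 1)
    (hδ : δ ∈ Set.Ioo (0 : ℝ) 1) (hγ : γ ∈ Set.Ioo (0 : ℝ) 1) (hθ : θ ∈ Set.Ioo (0 : ℝ) 1) :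
    sivFVD G β δ γ θ (sivDFP n γ θ) = sivDFP n γ θ ∧
    ((1 - θ) * (γ / (γ + θ)) * (β / δ) * lamMax (G.adjMatrix ℝ) < 1 →
      ∃ V : Set ((Fin n → ℝ) × (Fin n → ℝ)), IsOpen V ∧ sivDFP n γ θ ∈ V ∧
        ∀ p ∈ V ∩ sivD n,
          Filter.Tendsto (fun t => (sivFVD G β δ γ θ)^[t] p) Filter.atTop
            (nhds (sivDFP n γ θ))) ∧
    ((1 - θ) * (β / δ) * lamMax (G.adjMatrix ℝ) < 1 →
      ∀ p ∈ sivD n,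
        Filter.Tendsto (fun t => (sivFVD G β δ γ θ)^[t] p) Filter.atTop
          (nhds (sivDFP n γ θ))) :=
  ⟨isFixedPt_sivDFP G (add_pos hγ.1 hθ.1).ne',
    exists_isOpen_tendsto_iterate_sivFVD_sivDFP G hβ hδ hγ hθ,
    fun h _ hp => tendsto_iterate_sivFVD_sivDFP G hβ hδ hγ hθ h hp⟩

/-- `((θ/(γ+θ))1, 0)` is a fixed point of `F_VD`; it is locally stable in `D`
if `(1−θ)(γ/(γ+θ))(β/δ)λmax(A) < 1`, and globally stable on `D` if `(1−θ)(β/δ)λmax(A) < 1`. -/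
theorem stmt18 {n : ℕ} (hn : 1 ≤ n) (G : SimpleGraph (Fin n)) [DecidableRel G.Adj]
    (hG : G.Connected) (β δ γ θ : ℝ) (hβ : β ∈ Set.Ioo (0 : ℝ) 1)
    (hδ : δ ∈ Set.Ioo (0 : ℝ) 1) (hγ : γ ∈ Set.Ioo (0 : ℝ) 1) (hθ : θ ∈ Set.Ioo (0 : ℝ) 1) :
    sivFVD G β δ γ θ (sivDFP n γ θ) = sivDFP n γ θ ∧
    ((1 - θ) * (γ / (γ + θ)) * (β / δ) * lamMax (G.adjMatrix ℝ) < 1 →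
      ∃ V : Set ((Fin n → ℝ) × (Fin n → ℝ)), IsOpen V ∧ sivDFP n γ θ ∈ V ∧
        ∀ p ∈ V ∩ sivD n,
          Filter.Tendsto (fun t => (sivFVD G β δ γ θ)^[t] p) Filter.atTop
            (nhds (sivDFP n γ θ))) ∧
    ((1 - θ) * (β / δ) * lamMax (G.adjMatrix ℝ) < 1 →
      ∀ p ∈ sivD n,
        Filter.Tendsto (fun t => (sivFVD G β δ γ θ)^[t] p) Filter.atTop
          (nhds (sivDFP n γ θ))) :=
  stmt18_general G β δ γ θ hβ hδ hγ hθ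
end
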